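/- arXiv:0909.0567 — 11 statements merged into one kernel-verified Lean document; each statement's English description precedes it below -/
import Mathlib

section
/- Assume ∫₀¹ ν₊(x)² dx = ∞ (ν₊ ∉ L²(0,1)). Let φ : (0,∞) → ℝ be differentiable with ∫₀^∞ φ(x)² dx < ∞, and suppose the function x ↦ c(x)φ'(x) is differentiable on (0,∞) with derivative g satisfying ∫₀^∞ g(x)² dx < ∞ (these conditions express membership of φ in the domain of the adjoint H₊*). Then lim_{x→0⁺} c(x)φ'(x) = 0 and lim_{x→0⁺} c(x)·φ(x)·φ'(x) = 0. -/
/-!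
Write `u = c φ'`. Since `u' = g ∈ L²`, `u` has a limit `L` at `0⁺`. If `L ≠ 0`, then near `0` the
derivative `φ' = u / c` is comparable to `L / c`, so `|φ| ≥ |L| ν₊ / 2 - C`, contradicting
`φ ∈ L²` and `ν₊ ∉ L²`. With `L = 0`, Cauchy–Schwarz gives `u(x)² ≤ ‖g‖₂² x`; as `1/x` is not
integrable at `0` and `φ ∈ L²`, `u φ` comes arbitrarily close to `0` along a sequence `x → 0⁺`.
Finally `(u φ)' = g φ + u² / c` with `g φ ∈ L¹` and `u² / c ≥ 0`, so `u φ` is a monotone function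
plus a function with a limit; along with the previous sequence this forces `u φ → 0`.
-/

open MeasureTheory Filter Set Topology

theorem tendsto_intervalIntegral_nhdsGT {f : ℝ → ℝ} {a b : ℝ} (hab : a < b)
    (hf : IntervalIntegrable f volume a b) :
    Tendsto (fun x => ∫ s in a..x, f s) (𝓝[>] a) (𝓝 0) := by
  have hcont := intervalIntegral.continuousOn_primitive_interval' hf left_mem_uIcc a left_mem_uIcc
  have hIcc : uIcc a b ∈ 𝓝[>] a := by simpa [uIcc_of_le hab.le] using Icc_mem_nhdsGT hab
  simpa using (hcont.mono_of_mem_nhdsWithin hIcc).tendsto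

theorem exists_tendsto_nhdsGT_of_hasDerivAt {u g : ℝ → ℝ} {a b : ℝ} (hab : a < b)
    (hu : ∀ x ∈ Ioc a b, HasDerivAt u (g x) x) (hg : IntervalIntegrable g volume a b) :
    ∃ L, Tendsto u (𝓝[>] a) (𝓝 L) ∧ ∀ x ∈ Ioc a b, u x = L + ∫ s in a..x, g s := by
  have hrepr : ∀ x ∈ Ioc a b, u x = (u b - ∫ s in a..b, g s) + ∫ s in a..x, g s := by
    intro x hx
    have hxab : x ∈ uIcc a b := mem_uIcc_of_le hx.1.le hx.2
    have hftc : ∫ s in x..b, g s = u b - u x :=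
      intervalIntegral.integral_eq_sub_of_hasDerivAt
        (fun s hs => hu s ⟨hx.1.trans_le (uIcc_of_le hx.2 ▸ hs).1, (uIcc_of_le hx.2 ▸ hs).2⟩)
        (hg.mono_set (uIcc_subset_uIcc_right hxab))
    have hsplit := intervalIntegral.integral_interval_sub_left hg
      (hg.mono_set (uIcc_subset_uIcc_left hxab))
    linarith
  refine ⟨_, ?_, hrepr⟩
  have hlim := (tendsto_intervalIntegral_nhdsGT hab hg).const_add (u b - ∫ s in a..b, g s)
  rw [add_zero] at hlim
  exact hlim.congr' (eventually_of_mem (Ioc_mem_nhdsGT hab) fun x hx => (hrepr x hx).symm)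

theorem sq_intervalIntegral_le {g : ℝ → ℝ} {a b : ℝ} (hab : a ≤ b)
    (hg : IntervalIntegrable g volume a b)
    (hg2 : IntervalIntegrable (fun s => g s ^ 2) volume a b) :
    (∫ s in a..b, g s) ^ 2 ≤ (b - a) * ∫ s in a..b, g s ^ 2 := by
  -- `t ↦ ∫ (g - t)²` is a nonnegative quadratic, so its discriminant is nonpositive
  have hquad : ∀ t : ℝ, 0 ≤ (b - a) * (t * t) + (-2 * ∫ s in a..b, g s) * t
      + ∫ s in a..b, g s ^ 2 := by
    intro t
    have hsq : ∫ s in a..b, (g s - t) ^ 2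
        = (b - a) * (t * t) + (-2 * ∫ s in a..b, g s) * t + ∫ s in a..b, g s ^ 2 := by
      have hexp : ∀ s, (g s - t) ^ 2 = g s ^ 2 - 2 * t * g s + t ^ 2 := fun s => by ring
      simp_rw [hexp]
      rw [intervalIntegral.integral_add (hg2.sub (hg.const_mul _)) intervalIntegrable_const,
        intervalIntegral.integral_sub hg2 (hg.const_mul _), intervalIntegral.integral_const_mul,
        intervalIntegral.integral_const, smul_eq_mul]
      ring
    rw [← hsq]
    exact intervalIntegral.integral_nonneg hab fun s _ => sq_nonneg _
  have hdisc := discrim_le_zero hquad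
  rw [discrim] at hdisc
  linarith

theorem sq_intervalIntegral_le_setIntegral_Ioi_mul {g : ℝ → ℝ} {x : ℝ} (hx : 0 ≤ x)
    (hg : IntervalIntegrable g volume 0 x) (hg2 : IntegrableOn (fun s => g s ^ 2) (Ioi 0)) :
    (∫ s in (0:ℝ)..x, g s) ^ 2 ≤ (∫ s in Ioi 0, g s ^ 2) * x := by
  have hg2_le : ∫ s in (0:ℝ)..x, g s ^ 2 ≤ ∫ s in Ioi 0, g s ^ 2 := by
    rw [intervalIntegral.integral_of_le hx]
    exact setIntegral_mono_set hg2 (ae_of_all _ fun s => sq_nonneg _)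
      Ioc_subset_Ioi_self.eventuallyLE
  calc (∫ s in (0:ℝ)..x, g s) ^ 2 ≤ (x - 0) * ∫ s in (0:ℝ)..x, g s ^ 2 :=
        sq_intervalIntegral_le hx hg
          ((intervalIntegrable_iff_integrableOn_Ioc_of_le hx).2 (hg2.mono_set Ioc_subset_Ioi_self))
    _ ≤ (∫ s in Ioi 0, g s ^ 2) * x := by
        rw [sub_zero, mul_comm]; exact mul_le_mul_of_nonneg_right hg2_le hx

theorem mul_intervalIntegral_le_abs_sub_of_hasDerivAt {φ u w : ℝ → ℝ} {L x a : ℝ} (hxa : x ≤ a)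
    (hφ : ∀ s ∈ Icc x a, HasDerivAt φ (u s * w s) s)
    (hu : ∀ s ∈ Icc x a, |u s - L| ≤ |L| / 2) (hw : ∀ s ∈ Icc x a, 0 ≤ w s)
    (hwi : IntervalIntegrable w volume x a)
    (huwi : IntervalIntegrable (fun s => u s * w s) volume x a) :
    |L| / 2 * ∫ s in x..a, w s ≤ |φ a - φ x| := by
  rw [← intervalIntegral.integral_eq_sub_of_hasDerivAt (by rwa [uIcc_of_le hxa]) huwi]
  rcases eq_or_ne L 0 with rfl | hL
  · simp
  have hpt : ∀ s ∈ Icc x a, L ^ 2 / 2 * w s ≤ L * (u s * w s) := by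
    intro s hs
    have hLu : L ^ 2 / 2 ≤ L * u s := by
      have hclose := mul_le_mul_of_nonneg_left (hu s hs) (abs_nonneg L)
      have hdev := neg_abs_le (L * (u s - L))
      rw [abs_mul] at hdev
      nlinarith [abs_mul_abs_self L]
    nlinarith [hw s hs]
  have hint : L ^ 2 / 2 * ∫ s in x..a, w s ≤ L * ∫ s in x..a, u s * w s := by
    rw [← intervalIntegral.integral_const_mul, ← intervalIntegral.integral_const_mul]
    exact intervalIntegral.integral_mono_on hxa (hwi.const_mul _) (huwi.const_mul _) hpt
  have habs : L * ∫ s in x..a, u s * w s ≤ |L| * |∫ s in x..a, u s * w s| := by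
    rw [← abs_mul]; exact le_abs_self _
  have hsq : |L| * (|L| / 2 * ∫ s in x..a, w s) = L ^ 2 / 2 * ∫ s in x..a, w s := by
    rw [← sq_abs]; ring
  exact le_of_mul_le_mul_left (by linarith) (abs_pos.2 hL)

theorem lintegral_ofReal_sq_lt_top_of_abs_le {α : Type*} [MeasurableSpace α] {μ : Measure α}
    [IsFiniteMeasure μ] {f φ : α → ℝ} {A B : ℝ} (hφ : Integrable (fun x => φ x ^ 2) μ)
    (hf : ∀ᵐ x ∂μ, |f x| ≤ A * |φ x| + B) :
    ∫⁻ x, ENNReal.ofReal (f x ^ 2) ∂μ < ⊤ := by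
  have hdom : ∀ᵐ x ∂μ, f x ^ 2 ≤ 2 * A ^ 2 * φ x ^ 2 + 2 * B ^ 2 := by
    filter_upwards [hf] with x hx
    have hsq := pow_le_pow_left₀ (abs_nonneg (f x)) hx 2
    rw [sq_abs] at hsq
    nlinarith [sq_abs (φ x), sq_nonneg (A * |φ x| - B)]
  exact lt_of_le_of_lt (lintegral_mono_ae (hdom.mono fun x hx => ENNReal.ofReal_le_ofReal hx))
    ((hφ.const_mul _).add (integrable_const _)).lintegral_lt_top

theorem eq_zero_of_tendsto_mul_deriv {c φ : ℝ → ℝ} {L : ℝ}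
    (hc_cont : ContinuousOn c (Ioi 0)) (hc_pos : ∀ x > (0:ℝ), 0 < c x)
    (hν : ∫⁻ x in Ioc (0:ℝ) 1, ENNReal.ofReal ((∫ s in x..1, (c s)⁻¹) ^ 2) = ⊤)
    (hφ_diff : ∀ x > (0:ℝ), DifferentiableAt ℝ φ x)
    (hφ_L2 : IntegrableOn (fun x => φ x ^ 2) (Ioc 0 1))
    (hu_cont : ContinuousOn (fun x => c x * deriv φ x) (Ioi 0))
    (hL : Tendsto (fun x => c x * deriv φ x) (𝓝[>] 0) (𝓝 L)) : L = 0 := by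
  by_contra hL0
  have hLpos : 0 < |L| := abs_pos.2 hL0
  obtain ⟨a, ha, hua⟩ : ∃ a ∈ Ioc (0:ℝ) 1, ∀ s ∈ Ioc 0 a, |c s * deriv φ s - L| ≤ |L| / 2 := by
    obtain ⟨b, hb, hsub⟩ := mem_nhdsGT_iff_exists_Ioc_subset.1
      (hL (Metric.closedBall_mem_nhds L (half_pos hLpos)))
    refine ⟨min b 1, ⟨lt_min hb one_pos, min_le_right _ _⟩, fun s hs => ?_⟩
    simpa [Real.dist_eq] using hsub ⟨hs.1, hs.2.trans (min_le_left _ _)⟩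
  have hcinv : ContinuousOn (fun s => (c s)⁻¹) (Ioi 0) :=
    hc_cont.inv₀ fun x hx => (hc_pos x hx).ne'
  have hcinv_nonneg : ∀ s > (0:ℝ), 0 ≤ (c s)⁻¹ := fun s hs => inv_nonneg.2 (hc_pos s hs).le
  have hcinv_int : ∀ x y : ℝ, 0 < x → x ≤ y → IntervalIntegrable (fun s => (c s)⁻¹) volume x y :=
    fun x y hx hxy => (hcinv.mono (by
      rw [uIcc_of_le hxy]; exact fun s hs => hx.trans_le hs.1)).intervalIntegrable
  have hν_nonneg : ∀ x ∈ Ioc (0:ℝ) 1, 0 ≤ ∫ s in x..1, (c s)⁻¹ := fun x hx =>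
    intervalIntegral.integral_nonneg hx.2 fun s hs => hcinv_nonneg s (hx.1.trans_le hs.1)
  have hν_sub : ∀ x ∈ Ioc 0 a, (∫ s in x..1, (c s)⁻¹) - ∫ s in a..1, (c s)⁻¹
      = ∫ s in x..a, (c s)⁻¹ := fun x hx => by
    rw [← intervalIntegral.integral_add_adjacent_intervals (hcinv_int x a hx.1 hx.2)
      (hcinv_int a 1 ha.1 ha.2)]
    ring
  have hlow : ∀ x ∈ Ioc 0 a, |L| / 2 * ((∫ s in x..1, (c s)⁻¹) - ∫ s in a..1, (c s)⁻¹)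
      ≤ |φ a - φ x| := by
    intro x hx
    have hsub : Icc x a ⊆ Ioi 0 := fun s hs => hx.1.trans_le hs.1
    rw [hν_sub x hx]
    refine mul_intervalIntegral_le_abs_sub_of_hasDerivAt hx.2 (fun s hs => ?_)
      (fun s hs => hua s ⟨hx.1.trans_le hs.1, hs.2⟩) (fun s hs => hcinv_nonneg s (hsub hs))
      (hcinv_int x a hx.1 hx.2)
      ((hu_cont.mul hcinv).mono (by rwa [uIcc_of_le hx.2])).intervalIntegrable
    refine (hφ_diff s (hsub hs)).hasDerivAt.congr_deriv ?_
    field_simp [(hc_pos s (hsub hs)).ne']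
  have hbound : ∀ x ∈ Ioc (0:ℝ) 1, |∫ s in x..1, (c s)⁻¹|
      ≤ 2 / |L| * |φ x| + (2 / |L| * |φ a| + ∫ s in a..1, (c s)⁻¹) := by
    intro x hx
    rw [abs_of_nonneg (hν_nonneg x hx)]
    have hφ_nonneg : 0 ≤ 2 / |L| * |φ x| + 2 / |L| * |φ a| := by positivity
    rcases le_total x a with hxa | hax
    · have hdiff : (∫ s in x..1, (c s)⁻¹) - ∫ s in a..1, (c s)⁻¹ ≤ 2 * (|φ a| + |φ x|) / |L| :=
        (le_div_iff₀' hLpos).2 (by linarith [hlow x ⟨hx.1, hxa⟩, abs_sub (φ a) (φ x)])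
      have hsplit : 2 * (|φ a| + |φ x|) / |L| = 2 / |L| * |φ x| + 2 / |L| * |φ a| := by ring
      linarith
    · have hanti := intervalIntegral.integral_mono_interval hax hx.2 le_rfl
        ((ae_restrict_iff' measurableSet_Ioc).2 (ae_of_all _ fun s hs =>
          hcinv_nonneg s (ha.1.trans hs.1))) (hcinv_int a 1 ha.1 ha.2)
      linarith
  exact (lintegral_ofReal_sq_lt_top_of_abs_le hφ_L2
    ((ae_restrict_iff' measurableSet_Ioc).2 (ae_of_all _ hbound))).ne hν

theorem frequently_abs_mul_lt {u φ : ℝ → ℝ} {K b δ : ℝ} (hb : 0 < b)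
    (hu : ∀ x ∈ Ioc 0 b, u x ^ 2 ≤ K * x) (hφ : IntegrableOn (fun x => φ x ^ 2) (Ioc 0 b))
    (hδ : 0 < δ) : ∃ᶠ x in 𝓝[>] 0, |u x * φ x| < δ := by
  by_contra h
  simp only [not_frequently, not_lt] at h
  obtain ⟨b', hb', hsub⟩ := mem_nhdsGT_iff_exists_Ioo_subset.1 (h.and (Ioc_mem_nhdsGT hb))
  have hinv : IntegrableOn (fun x : ℝ => x⁻¹) (Ioo 0 b') := by
    refine ((hφ.mono_set fun x hx => (hsub hx).2).const_mul (K / δ ^ 2)).mono'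
      measurable_inv.aestronglyMeasurable ((ae_restrict_iff' measurableSet_Ioo).2
        (ae_of_all _ fun x hx => ?_))
    obtain ⟨hδx, hxb⟩ := hsub hx
    have hsq := pow_le_pow_left₀ hδ.le hδx 2
    rw [sq_abs, mul_pow] at hsq
    have hKx : δ ^ 2 ≤ K * x * φ x ^ 2 :=
      hsq.trans (mul_le_mul_of_nonneg_right (hu x hxb) (sq_nonneg _))
    rw [Real.norm_of_nonneg (inv_nonneg.2 hx.1.le), div_mul_eq_mul_div,
      le_div_iff₀ (by positivity), inv_mul_le_iff₀ hx.1]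
    linarith
  have hinv' := (intervalIntegrable_iff_integrableOn_Ioo_of_le (le_of_lt hb')).2 hinv
  simp [intervalIntegrable_inv_iff, (mem_Ioi.1 hb').ne, (mem_Ioi.1 hb').le] at hinv'

theorem tendsto_nhdsGT_of_monotoneOn_sub {f e : ℝ → ℝ} {a b A : ℝ} (hab : a < b)
    (hm : MonotoneOn (fun x => f x - e x) (Ioo a b)) (he : Tendsto e (𝓝[>] a) (𝓝 A))
    (hf : ∀ δ > 0, ∃ᶠ x in 𝓝[>] a, |f x| < δ) : Tendsto f (𝓝[>] a) (𝓝 0) := by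
  refine Metric.tendsto_nhds.2 fun ε hε => ?_
  have hε4 : ε / 4 > 0 := by positivity
  have hnear : ∀ᶠ x in 𝓝[>] a, x ∈ Ioo a b ∧ |e x - A| < ε / 4 :=
    (eventually_mem_set.2 (Ioo_mem_nhdsGT hab)).and (Metric.tendsto_nhds.1 he _ hε4)
  obtain ⟨x₀, hfx₀, hx₀, hex₀⟩ := ((hf _ hε4).and_eventually hnear).exists
  filter_upwards [Ioo_mem_nhdsGT hx₀.1, hnear] with x hx ⟨hxab, hex⟩
  obtain ⟨x₁, hfx₁, ⟨hx₁, hex₁⟩, hx₁x⟩ :=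
    ((hf _ hε4).and_eventually (hnear.and (Ioo_mem_nhdsGT hx.1))).exists
  -- squeeze `f x` between its values at `x₁ < x < x₀`, where `f` is small
  have hup : f x - e x ≤ f x₀ - e x₀ := hm hxab hx₀ hx.2.le
  have hlow : f x₁ - e x₁ ≤ f x - e x := hm hx₁ hxab hx₁x.2.le
  rw [Real.dist_eq, sub_zero, abs_lt]
  obtain ⟨hex_l, hex_u⟩ := abs_lt.1 hex
  obtain ⟨hex₀_l, hex₀_u⟩ := abs_lt.1 hex₀
  obtain ⟨hex₁_l, hex₁_u⟩ := abs_lt.1 hex₁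
  obtain ⟨hfx₀_l, hfx₀_u⟩ := abs_lt.1 hfx₀
  obtain ⟨hfx₁_l, hfx₁_u⟩ := abs_lt.1 hfx₁
  constructor <;> linarith

theorem monotoneOn_sub_intervalIntegral {w h q : ℝ → ℝ} {a b : ℝ}
    (hw : ∀ x ∈ Ioo a b, HasDerivAt w (h x + q x) x) (hh : IntervalIntegrable h volume a b)
    (hq : ContinuousOn q (Ioo a b)) (hq0 : ∀ x ∈ Ioo a b, 0 ≤ q x) :
    MonotoneOn (fun x => w x - ∫ s in a..x, h s) (Ioo a b) := by
  intro x hx y hy hxy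
  have hsub : uIcc x y ⊆ Ioo a b := by
    rw [uIcc_of_le hxy]; exact Icc_subset_Ioo hx.1 hy.2
  have hmem : ∀ z ∈ Ioo a b, z ∈ uIcc a b := fun z hz => mem_uIcc_of_le hz.1.le hz.2.le
  have hhxy : IntervalIntegrable h volume x y :=
    hh.mono_set (uIcc_subset_uIcc (hmem x hx) (hmem y hy))
  have hqxy : IntervalIntegrable q volume x y := (hq.mono hsub).intervalIntegrable
  have hftc := intervalIntegral.integral_eq_sub_of_hasDerivAt (fun s hs => hw s (hsub hs))
    (hhxy.add hqxy)
  rw [intervalIntegral.integral_add hhxy hqxy] at hftc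
  have hsplit := intervalIntegral.integral_interval_sub_left
    (hh.mono_set (uIcc_subset_uIcc_left (hmem y hy)))
    (hh.mono_set (uIcc_subset_uIcc_left (hmem x hx)))
  have hq_nonneg : 0 ≤ ∫ s in x..y, q s :=
    intervalIntegral.integral_nonneg hxy fun s hs => hq0 s (hsub (Icc_subset_uIcc hs))
  simp only
  linarith

theorem aestronglyMeasurable_of_hasDerivAt {u g : ℝ → ℝ} {s : Set ℝ} (hs : MeasurableSet s)
    (hu : ∀ x ∈ s, HasDerivAt u (g x) x) : AEStronglyMeasurable g (volume.restrict s) :=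
  (measurable_deriv u).aestronglyMeasurable.congr
    ((ae_restrict_iff' hs).2 (ae_of_all _ fun x hx => (hu x hx).deriv))

/-- Paper: Lemma 2.2. If ν₊ ∉ L²(0,1) and φ is in the domain of H₊*, then
(cφ')(0⁺) = 0 and (c·φ·φ')(0⁺) = 0. -/
theorem stmt_1 (c : ℝ → ℝ)
    (hc_cont : ContinuousOn c (Set.Ioi 0))
    (hc_pos : ∀ x > (0:ℝ), 0 < c x)
    (hν : ∫⁻ x in Set.Ioc (0:ℝ) 1,
      ENNReal.ofReal ((∫ s in x..1, (c s)⁻¹) ^ 2) = ⊤)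
    (φ g : ℝ → ℝ)
    (hφ_diff : ∀ x > (0:ℝ), DifferentiableAt ℝ φ x)
    (hφ_L2 : MeasureTheory.IntegrableOn (fun x => (φ x) ^ 2) (Set.Ioi 0))
    (hg : ∀ x > (0:ℝ), HasDerivAt (fun y => c y * deriv φ y) (g x) x)
    (hg_L2 : MeasureTheory.IntegrableOn (fun x => (g x) ^ 2) (Set.Ioi 0)) :
    Filter.Tendsto (fun x => c x * deriv φ x)
      (nhdsWithin 0 (Set.Ioi 0)) (nhds 0) ∧
    Filter.Tendsto (fun x => c x * φ x * deriv φ x)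
      (nhdsWithin 0 (Set.Ioi 0)) (nhds 0) := by
  set u := fun x => c x * deriv φ x with hu
  have hu_cont : ContinuousOn u (Ioi 0) := fun x hx => (hg x hx).continuousAt.continuousWithinAt
  have hg_mem := (memLp_two_iff_integrable_sq
    (aestronglyMeasurable_of_hasDerivAt measurableSet_Ioi hg)).2 hg_L2
  have hφ_mem := (memLp_two_iff_integrable_sq (ContinuousOn.aestronglyMeasurable
    (fun x hx => (hφ_diff x hx).continuousAt.continuousWithinAt) measurableSet_Ioi)).2 hφ_L2
  have hrestrict : volume.restrict (Ioc (0:ℝ) 1) ≤ volume.restrict (Ioi 0) :=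
    Measure.restrict_mono Ioc_subset_Ioi_self le_rfl
  have hg_int : IntervalIntegrable g volume 0 1 := (intervalIntegrable_iff_integrableOn_Ioc_of_le
    zero_le_one).2 ((hg_mem.mono_measure hrestrict).integrable one_le_two)
  have hgφ_int : IntervalIntegrable (fun x => g x * φ x) volume 0 1 :=
    (intervalIntegrable_iff_integrableOn_Ioc_of_le zero_le_one).2
      ((hg_mem.integrable_mul hφ_mem).mono_measure hrestrict)
  obtain ⟨L, hu_lim, hu_eq⟩ :=
    exists_tendsto_nhdsGT_of_hasDerivAt one_pos (fun x hx => hg x hx.1) hg_int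
  obtain rfl : L = 0 := eq_zero_of_tendsto_mul_deriv hc_cont hc_pos hν hφ_diff
    (hφ_L2.mono_set Ioc_subset_Ioi_self) hu_cont hu_lim
  refine ⟨hu_lim, ?_⟩
  have hu_sq : ∀ x ∈ Ioc (0:ℝ) 1, u x ^ 2 ≤ (∫ s in Ioi 0, g s ^ 2) * x := fun x hx => by
    rw [hu_eq x hx, zero_add]
    exact sq_intervalIntegral_le_setIntegral_Ioi_mul hx.1.le
      (hg_int.mono_set (uIcc_subset_uIcc_left (mem_uIcc_of_le hx.1.le hx.2))) hg_L2
  have hmono : MonotoneOn (fun x => u x * φ x - ∫ s in (0:ℝ)..x, g s * φ s) (Ioo 0 1) := by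
    refine monotoneOn_sub_intervalIntegral (q := fun x => u x ^ 2 / c x)
      (fun x hx => ?_) hgφ_int
      (((hu_cont.pow 2).div hc_cont fun x hx => (hc_pos x hx).ne').mono Ioo_subset_Ioi_self)
      (fun x hx => div_nonneg (sq_nonneg _) (hc_pos x hx.1).le)
    refine ((hg x hx.1).mul (hφ_diff x hx.1).hasDerivAt).congr_deriv ?_
    simp only [hu]
    field_simp [(hc_pos x hx.1).ne']
  exact (tendsto_nhdsGT_of_monotoneOn_sub one_pos hmono
    (tendsto_intervalIntegral_nhdsGT one_pos hgφ_int) fun δ hδ =>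
      frequently_abs_mul_lt one_pos hu_sq (hφ_L2.mono_set Ioc_subset_Ioi_self) hδ).congr
    fun x => mul_right_comm _ _ _
end

section
/- Assume ∫₀¹ ν₊(x)² dx < ∞. Let ψ : (0,∞) → ℝ be measurable with ∫₀^∞ ψ(x)² dx < ∞. Then ν₊(x)·∫₀ˣ ψ(t) dt → 0 as x → 0⁺. (Combined with the preceding representation c·φ'(x) = −∫₀ˣ ψ on the closure domain, this says (ν₊·c·φ')(0⁺) = 0 for every φ in the domain of the closure of H₊.) -/
/-!
For `0 < x < 1`, `ν₊` is nonnegative and antitone on `(0, x]`, so `x · ν₊(x)² ≤ ∫₀ˣ ν₊²`, while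
Cauchy–Schwarz gives `(∫₀ˣ ψ)² ≤ x · ∫₀ˣ ψ²`. Multiplying, the factor `x` cancels:
`(ν₊(x) ∫₀ˣ ψ)² ≤ (∫₀ˣ ν₊²)(∫₀ˣ ψ²)`, and both integrals on the right tend to `0` as `x → 0⁺`
because `ν₊²` and `ψ²` are integrable near `0`.
-/

open MeasureTheory Filter Set Topology

theorem sq_integral_le_measureReal_mul_integral_sq {α : Type*} [MeasurableSpace α]
    {μ : Measure α} [IsFiniteMeasure μ] {f : α → ℝ} (hf : MemLp f 2 μ) :
    (∫ a, f a ∂μ) ^ 2 ≤ μ.real univ * ∫ a, f a ^ 2 ∂μ := by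
  have holder := integral_mul_norm_le_Lp_mul_Lq (μ := μ) (g := fun _ => (1 : ℝ))
    Real.HolderConjugate.two_two (by simpa using hf) (by simpa using memLp_const 1)
  simp only [norm_one, mul_one, one_pow, Real.rpow_two, Real.norm_eq_abs, sq_abs,
    integral_const, smul_eq_mul, ← Real.sqrt_eq_rpow] at holder
  calc (∫ a, f a ∂μ) ^ 2 = |∫ a, f a ∂μ| ^ 2 := (sq_abs _).symm
    _ ≤ (∫ a, |f a| ∂μ) ^ 2 := by gcongr; exact abs_integral_le_integral_abs
    _ ≤ (√(∫ a, f a ^ 2 ∂μ) * √(μ.real univ)) ^ 2 := by gcongr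
    _ = μ.real univ * ∫ a, f a ^ 2 ∂μ := by
        rw [mul_pow, Real.sq_sqrt (integral_nonneg fun _ => sq_nonneg _),
          Real.sq_sqrt measureReal_nonneg, mul_comm]

theorem tendsto_setIntegral_Ioc_nhdsGT {f : ℝ → ℝ} {a b : ℝ} (hab : a < b)
    (hf : IntegrableOn f (Ioc a b)) :
    Tendsto (fun x => ∫ t in Ioc a x, f t) (𝓝[>] a) (𝓝 0) := by
  have hcont := intervalIntegral.continuousOn_primitive
    ((integrableOn_Icc_iff_integrableOn_Ioc).2 hf)
  have h := (hcont a (left_mem_Icc.2 hab.le)).tendsto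
  rw [Ioc_self, Measure.restrict_empty, integral_zero_measure] at h
  rw [← nhdsWithin_Ioc_eq_nhdsGT hab]
  exact h.mono_left (nhdsWithin_mono a Ioc_subset_Icc_self)

theorem antitoneOn_intervalIntegral_of_nonneg {f : ℝ → ℝ} (hf : ContinuousOn f (Ioi 0))
    (hf_nonneg : ∀ x > 0, 0 ≤ f x) (b : ℝ) :
    AntitoneOn (fun x => ∫ s in x..b, f s) (Ioc 0 b) := by
  intro t ht x hx htx
  refine intervalIntegral.integral_mono_interval htx hx.2 le_rfl ?_ ?_
  · exact ae_restrict_of_forall_mem measurableSet_Ioc fun s hs => hf_nonneg s (ht.1.trans hs.1)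
  · refine (hf.mono fun s hs => ?_).intervalIntegrable
    exact ht.1.trans_le ((le_min le_rfl ht.2).trans hs.1)

theorem sq_mul_setIntegral_le {ν ψ : ℝ → ℝ} {a x : ℝ} (hax : a ≤ x)
    (hν_le : ∀ t ∈ Ioc a x, ν x ≤ ν t) (hν_nonneg : 0 ≤ ν x)
    (hν : IntegrableOn (fun t => ν t ^ 2) (Ioc a x))
    (hψ : MemLp ψ 2 (volume.restrict (Ioc a x))) :
    (ν x * ∫ t in Ioc a x, ψ t) ^ 2 ≤ (∫ t in Ioc a x, ν t ^ 2) * ∫ t in Ioc a x, ψ t ^ 2 := by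
  have hν_sq : (x - a) * ν x ^ 2 ≤ ∫ t in Ioc a x, ν t ^ 2 := by
    simpa [hax] using setIntegral_ge_of_const_le measurableSet_Ioc (by simp)
      (fun t ht => pow_le_pow_left₀ hν_nonneg (hν_le t ht) 2) hν
  have hψ_sq : (∫ t in Ioc a x, ψ t) ^ 2 ≤ (x - a) * ∫ t in Ioc a x, ψ t ^ 2 := by
    simpa [hax] using sq_integral_le_measureReal_mul_integral_sq hψ
  calc (ν x * ∫ t in Ioc a x, ψ t) ^ 2
      ≤ ν x ^ 2 * ((x - a) * ∫ t in Ioc a x, ψ t ^ 2) := by rw [mul_pow]; gcongr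
    _ = (x - a) * ν x ^ 2 * ∫ t in Ioc a x, ψ t ^ 2 := by ring
    _ ≤ (∫ t in Ioc a x, ν t ^ 2) * ∫ t in Ioc a x, ψ t ^ 2 := by gcongr

theorem tendsto_zero_of_sq_le {α : Type*} {l : Filter α} {f g : α → ℝ}
    (hfg : ∀ᶠ x in l, f x ^ 2 ≤ g x) (hg : Tendsto g l (𝓝 0)) : Tendsto f l (𝓝 0) := by
  refine squeeze_zero_norm' (hfg.mono fun x hx => ?_) (by simpa using hg.sqrt)
  rw [Real.norm_eq_abs, ← Real.sqrt_sq_eq_abs]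
  exact Real.sqrt_le_sqrt hx

/-- Paper: Corollary 2.5. If ν₊ ∈ L²(0,1) and ψ ∈ L²(0,∞) then
ν₊(x)·∫₀ˣ ψ → 0 as x → 0⁺. -/
theorem stmt_3 (c : ℝ → ℝ)
    (hc_cont : ContinuousOn c (Set.Ioi 0))
    (hc_pos : ∀ x > (0:ℝ), 0 < c x)
    (hν_L2 : MeasureTheory.IntegrableOn
      (fun x => (∫ s in x..1, (c s)⁻¹) ^ 2) (Set.Ioc 0 1))
    (ψ : ℝ → ℝ) (hψ_meas : Measurable ψ)
    (hψ_L2 : MeasureTheory.IntegrableOn (fun x => (ψ x) ^ 2) (Set.Ioi 0)) :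
    Filter.Tendsto
      (fun x => (∫ s in x..1, (c s)⁻¹) * ∫ t in Set.Ioc (0:ℝ) x, ψ t)
      (nhdsWithin 0 (Set.Ioi 0)) (nhds 0) := by
  have hinv_nonneg : ∀ s > 0, 0 ≤ (c s)⁻¹ := fun s hs => (inv_pos.2 (hc_pos s hs)).le
  have hν_anti := antitoneOn_intervalIntegral_of_nonneg
    (hc_cont.inv₀ fun s hs => (hc_pos s hs).ne') hinv_nonneg 1
  have hψ_memLp : ∀ x, MemLp ψ 2 (volume.restrict (Ioc 0 x)) := fun x =>
    (memLp_two_iff_integrable_sq hψ_meas.aestronglyMeasurable).2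
      (hψ_L2.mono_set Ioc_subset_Ioi_self)
  have hlim := (tendsto_setIntegral_Ioc_nhdsGT one_pos hν_L2).mul
    (tendsto_setIntegral_Ioc_nhdsGT one_pos (hψ_L2.mono_set Ioc_subset_Ioi_self))
  rw [zero_mul] at hlim
  refine tendsto_zero_of_sq_le ?_ hlim
  filter_upwards [Ioc_mem_nhdsGT one_pos] with x hx
  exact sq_mul_setIntegral_le hx.1.le (fun t ht => hν_anti ⟨ht.1, ht.2.trans hx.2⟩ hx ht.2)
    (intervalIntegral.integral_nonneg hx.2 fun s hs => hinv_nonneg s (hx.1.trans_le hs.1))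
    (hν_L2.mono_set (Ioc_subset_Ioc_right hx.2)) (hψ_memLp x)
end

section
/- Assume ∫₀¹ ν₊(x)² dx = ∞. Let ψ : (0,∞) → ℝ be differentiable with ∫₀^∞ ψ(x)² dx < ∞, and suppose the function x ↦ c(x)ψ'(x) is differentiable on (0,∞) with (c(x)ψ'(x))' = ψ(x) for every x > 0. Then ψ(x) = 0 for all x > 0. -/
/-!
Along a solution of `(c ψ')' = ψ` the quantity `(c ψ') ψ` has derivative `ψ² + c ψ'² ≥ 0`, so it is
nondecreasing; if it were ever positive, `ψ²` would be nondecreasing from then on, which is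
incompatible with `ψ ∈ L²(0, ∞)`. Hence `(c ψ') ψ ≤ 0` and `ψ²` is nonincreasing. If `ψ(x₁) > 0`,
then `ψ ≥ ψ(x₁)` on `(0, x₁]`, so the flux `c ψ'` is strictly increasing there and bounded above by
some `-A < 0` near `0`. Then `ψ' ≤ -A / c = A ν₊'`, so `ψ - A ν₊` is nonincreasing near `0`, and
`ν₊ ≤ |ψ| / A + C` puts `ν₊` in `L²(0, 1)`. Applying this to `±ψ` gives `ψ = 0`.
-/

open MeasureTheory Set

lemma monotoneOn_sq_of_mul_deriv_nonneg {ψ : ℝ → ℝ} {D : Set ℝ} (hD : Convex ℝ D)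
    (hψ : ∀ x ∈ D, DifferentiableAt ℝ ψ x) (h : ∀ x ∈ interior D, 0 ≤ ψ x * deriv ψ x) :
    MonotoneOn (fun x => ψ x ^ 2) D := by
  refine monotoneOn_of_deriv_nonneg hD
    (fun x hx => ((hψ x hx).fun_pow 2).continuousAt.continuousWithinAt)
    (fun x hx => ((hψ x (interior_subset hx)).fun_pow 2).differentiableWithinAt) fun x hx => ?_
  rw [((hψ x (interior_subset hx)).hasDerivAt.fun_pow 2).deriv]
  norm_num
  linarith [h x hx]

lemma antitoneOn_sq_of_mul_deriv_nonpos {ψ : ℝ → ℝ} {D : Set ℝ} (hD : Convex ℝ D)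
    (hψ : ∀ x ∈ D, DifferentiableAt ℝ ψ x) (h : ∀ x ∈ interior D, ψ x * deriv ψ x ≤ 0) :
    AntitoneOn (fun x => ψ x ^ 2) D := by
  refine antitoneOn_of_deriv_nonpos hD
    (fun x hx => ((hψ x hx).fun_pow 2).continuousAt.continuousWithinAt)
    (fun x hx => ((hψ x (interior_subset hx)).fun_pow 2).differentiableWithinAt) fun x hx => ?_
  rw [((hψ x (interior_subset hx)).hasDerivAt.fun_pow 2).deriv]
  norm_num
  linarith [h x hx]

lemma eq_zero_of_monotoneOn_of_integrableOn_Ici {f : ℝ → ℝ} {a : ℝ} (hf : MonotoneOn f (Ici a))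
    (hint : IntegrableOn f (Ici a)) (ha : 0 ≤ f a) : f a = 0 := by
  have hconst : IntegrableOn (fun _ => f a) (Ici a) :=
    hint.mono' aestronglyMeasurable_const <|
      (ae_restrict_mem measurableSet_Ici).mono fun x hx => by
        rw [Real.norm_of_nonneg ha]
        exact hf self_mem_Ici hx hx
  simpa using (integrableOn_const_iff (by simp)).mp hconst

lemma le_of_antitoneOn_sq {ψ : ℝ → ℝ} {a b : ℝ} (hab : a ≤ b) (hψ : ContinuousOn ψ (Icc a b))
    (hanti : AntitoneOn (fun x => ψ x ^ 2) (Icc a b)) (hb : 0 < ψ b) : ψ b ≤ ψ a := by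
  have hsq : ∀ x ∈ Icc a b, ψ b ^ 2 ≤ ψ x ^ 2 := fun x hx => hanti hx (right_mem_Icc.2 hab) hx.2
  have ha : 0 ≤ ψ a := by
    by_contra! hneg
    obtain ⟨z, hz, hz0⟩ := intermediate_value_Icc hab hψ ⟨hneg.le, hb.le⟩
    nlinarith [hsq z hz]
  nlinarith [hsq a (left_mem_Icc.2 hab)]

section Solution

variable {c ψ : ℝ → ℝ}

lemma monotoneOn_flux_mul (hc_pos : ∀ x > (0:ℝ), 0 < c x)
    (hψ_diff : ∀ x > (0:ℝ), DifferentiableAt ℝ ψ x)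
    (hode : ∀ x > (0:ℝ), HasDerivAt (fun y => c y * deriv ψ y) (ψ x) x) :
    MonotoneOn (fun x => c x * deriv ψ x * ψ x) (Ioi 0) := by
  have hE : ∀ x > (0:ℝ), HasDerivAt (fun y => c y * deriv ψ y * ψ y)
      (ψ x * ψ x + c x * deriv ψ x * deriv ψ x) x :=
    fun x hx => (hode x hx).mul (hψ_diff x hx).hasDerivAt
  refine monotoneOn_of_deriv_nonneg (convex_Ioi 0)
    (fun x hx => (hE x hx).continuousAt.continuousWithinAt)
    (fun x hx => (hE x (interior_subset hx)).differentiableAt.differentiableWithinAt)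
    fun x hx => ?_
  rw [interior_Ioi] at hx
  rw [(hE x hx).deriv]
  nlinarith [mul_self_nonneg (ψ x), mul_nonneg (hc_pos x hx).le (mul_self_nonneg (deriv ψ x))]

lemma flux_mul_nonpos (hc_pos : ∀ x > (0:ℝ), 0 < c x)
    (hψ_diff : ∀ x > (0:ℝ), DifferentiableAt ℝ ψ x)
    (hψ_L2 : IntegrableOn (fun x => ψ x ^ 2) (Ioi 0))
    (hode : ∀ x > (0:ℝ), HasDerivAt (fun y => c y * deriv ψ y) (ψ x) x) {x : ℝ} (hx : 0 < x) :
    c x * deriv ψ x * ψ x ≤ 0 := by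
  by_contra! hpos
  have hIci : Ici x ⊆ Ioi 0 := Ici_subset_Ioi.2 hx
  have hsq : MonotoneOn (fun y => ψ y ^ 2) (Ici x) :=
    monotoneOn_sq_of_mul_deriv_nonneg (convex_Ici x) (fun y hy => hψ_diff y (hIci hy))
      fun y hy => by
        have hy' : y ∈ Ici x := interior_subset hy
        have hEy := hpos.trans_le (monotoneOn_flux_mul hc_pos hψ_diff hode hx (hIci hy') hy')
        nlinarith [hc_pos y (hIci hy')]
  have hψx : ψ x = 0 := by
    simpa using eq_zero_of_monotoneOn_of_integrableOn_Ici hsq (hψ_L2.mono_set hIci) (sq_nonneg _)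
  simp [hψx] at hpos

lemma antitoneOn_sq (hc_pos : ∀ x > (0:ℝ), 0 < c x)
    (hψ_diff : ∀ x > (0:ℝ), DifferentiableAt ℝ ψ x)
    (hψ_L2 : IntegrableOn (fun x => ψ x ^ 2) (Ioi 0))
    (hode : ∀ x > (0:ℝ), HasDerivAt (fun y => c y * deriv ψ y) (ψ x) x) :
    AntitoneOn (fun x => ψ x ^ 2) (Ioi 0) :=
  antitoneOn_sq_of_mul_deriv_nonpos (convex_Ioi 0) hψ_diff fun x hx => by
    rw [interior_Ioi] at hx
    nlinarith [flux_mul_nonpos hc_pos hψ_diff hψ_L2 hode hx, hc_pos x hx]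

lemma exists_flux_le_neg (hc_pos : ∀ x > (0:ℝ), 0 < c x)
    (hψ_diff : ∀ x > (0:ℝ), DifferentiableAt ℝ ψ x)
    (hψ_L2 : IntegrableOn (fun x => ψ x ^ 2) (Ioi 0))
    (hode : ∀ x > (0:ℝ), HasDerivAt (fun y => c y * deriv ψ y) (ψ x) x) {x₁ : ℝ} (hx₁ : 0 < x₁)
    (hψx₁ : 0 < ψ x₁) : ∃ m > 0, ∃ A > 0, ∀ x ∈ Ioc 0 m, c x * deriv ψ x ≤ -A := by
  have hψ_pos : ∀ x ∈ Ioc 0 x₁, 0 < ψ x := fun x hx => by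
    have hsub : Icc x x₁ ⊆ Ioi 0 := fun y hy => hx.1.trans_le hy.1
    exact hψx₁.trans_le <| le_of_antitoneOn_sq hx.2
      (fun y hy => (hψ_diff y (hsub hy)).continuousAt.continuousWithinAt)
      ((antitoneOn_sq hc_pos hψ_diff hψ_L2 hode).mono hsub) hψx₁
  have hflux_mono : StrictMonoOn (fun y => c y * deriv ψ y) (Ioc 0 x₁) :=
    strictMonoOn_of_deriv_pos (convex_Ioc 0 x₁)
      (fun x hx => (hode x hx.1).continuousAt.continuousWithinAt) fun x hx => by
        rw [interior_Ioc] at hx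
        rw [(hode x hx.1).deriv]
        exact hψ_pos x (Ioo_subset_Ioc_self hx)
  have hflux_x₁ : c x₁ * deriv ψ x₁ ≤ 0 :=
    nonpos_of_mul_nonpos_left (flux_mul_nonpos hc_pos hψ_diff hψ_L2 hode hx₁) hψx₁
  have hm : x₁ / 2 ∈ Ioc 0 x₁ := ⟨half_pos hx₁, half_le_self hx₁.le⟩
  refine ⟨x₁ / 2, hm.1, -(c (x₁ / 2) * deriv ψ (x₁ / 2)), ?_, fun x hx => ?_⟩
  · linarith [hflux_mono hm ⟨hx₁, le_rfl⟩ (half_lt_self hx₁)]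
  · rw [neg_neg]
    exact hflux_mono.monotoneOn ⟨hx.1, hx.2.trans hm.2⟩ hm hx.2

noncomputable def nuPlus (c : ℝ → ℝ) (x : ℝ) : ℝ := ∫ s in x..1, (c s)⁻¹

lemma hasDerivAt_nuPlus (hc_cont : ContinuousOn c (Ioi 0)) (hc_pos : ∀ x > (0:ℝ), 0 < c x)
    {x : ℝ} (hx : 0 < x) : HasDerivAt (nuPlus c) (-(c x)⁻¹) x := by
  have hinv : ContinuousOn (fun s => (c s)⁻¹) (Ioi 0) := hc_cont.inv₀ fun s hs => (hc_pos s hs).ne'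
  have hsub : uIcc x 1 ⊆ Ioi 0 := fun t ht => (lt_min hx one_pos).trans_le ht.1
  exact intervalIntegral.integral_hasDerivAt_left (hinv.mono hsub).intervalIntegrable
    (hinv.stronglyMeasurableAtFilter isOpen_Ioi x hx) (hinv.continuousAt (isOpen_Ioi.mem_nhds hx))

lemma antitoneOn_nuPlus (hc_cont : ContinuousOn c (Ioi 0)) (hc_pos : ∀ x > (0:ℝ), 0 < c x) :
    AntitoneOn (nuPlus c) (Ioi 0) := by
  refine antitoneOn_of_deriv_nonpos (convex_Ioi 0)
    (fun x hx => (hasDerivAt_nuPlus hc_cont hc_pos hx).continuousAt.continuousWithinAt)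
    (fun x hx => (hasDerivAt_nuPlus hc_cont hc_pos
      (interior_subset hx)).differentiableAt.differentiableWithinAt) fun x hx => ?_
  rw [interior_Ioi] at hx
  rw [(hasDerivAt_nuPlus hc_cont hc_pos hx).deriv, neg_nonpos]
  exact (inv_pos.2 (hc_pos x hx)).le

lemma nuPlus_nonneg (hc_pos : ∀ x > (0:ℝ), 0 < c x) {x : ℝ} (hx : 0 < x) (hx1 : x ≤ 1) :
    0 ≤ nuPlus c x :=
  intervalIntegral.integral_nonneg hx1 fun s hs => (inv_pos.2 (hc_pos s (hx.trans_le hs.1))).le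

lemma antitoneOn_sub_mul_nuPlus (hc_cont : ContinuousOn c (Ioi 0))
    (hc_pos : ∀ x > (0:ℝ), 0 < c x) (hψ_diff : ∀ x > (0:ℝ), DifferentiableAt ℝ ψ x) {m A : ℝ}
    (hflux : ∀ x ∈ Ioc 0 m, c x * deriv ψ x ≤ -A) :
    AntitoneOn (fun x => ψ x - A * nuPlus c x) (Ioc 0 m) := by
  have hd : ∀ x > (0:ℝ), HasDerivAt (fun x => ψ x - A * nuPlus c x)
      (deriv ψ x - A * -(c x)⁻¹) x := fun x hx =>
    (hψ_diff x hx).hasDerivAt.sub ((hasDerivAt_nuPlus hc_cont hc_pos hx).const_mul A)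
  refine antitoneOn_of_deriv_nonpos (convex_Ioc 0 m)
    (fun x hx => (hd x hx.1).continuousAt.continuousWithinAt)
    (fun x hx => (hd x (interior_subset hx).1).differentiableAt.differentiableWithinAt)
    fun x hx => ?_
  rw [interior_Ioc] at hx
  have hcx := hc_pos x hx.1
  have hψ' : deriv ψ x ≤ -A / c x := by
    rw [le_div_iff₀ hcx, mul_comm]
    exact hflux x (Ioo_subset_Ioc_self hx)
  rw [(hd x hx.1).deriv, mul_neg, sub_neg_eq_add, ← div_eq_mul_inv]
  linarith [neg_div (c x) A]

lemma nuPlus_le (hc_cont : ContinuousOn c (Ioi 0)) (hc_pos : ∀ x > (0:ℝ), 0 < c x)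
    (hψ_diff : ∀ x > (0:ℝ), DifferentiableAt ℝ ψ x) {m A : ℝ} (hm : 0 < m) (hA : 0 < A)
    (hflux : ∀ x ∈ Ioc 0 m, c x * deriv ψ x ≤ -A) {x : ℝ} (hx : 0 < x) :
    nuPlus c x ≤ A⁻¹ * |ψ x| + (A⁻¹ * |ψ m| + nuPlus c m) := by
  have habs : 0 ≤ A⁻¹ * |ψ x| + A⁻¹ * |ψ m| := by positivity
  rcases le_or_gt x m with hxm | hmx
  · have h := antitoneOn_sub_mul_nuPlus hc_cont hc_pos hψ_diff hflux ⟨hx, hxm⟩ ⟨hm, le_rfl⟩ hxm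
    have hAν : A * nuPlus c x ≤ |ψ x| + |ψ m| + A * nuPlus c m := by
      linarith [le_abs_self (ψ x), neg_abs_le (ψ m)]
    have := mul_le_mul_of_nonneg_left hAν (inv_nonneg.2 hA.le)
    rw [inv_mul_cancel_left₀ hA.ne', mul_add, mul_add, inv_mul_cancel_left₀ hA.ne'] at this
    linarith
  · linarith [antitoneOn_nuPlus hc_cont hc_pos hm hx hmx.le]

lemma memLp_nuPlus (hc_cont : ContinuousOn c (Ioi 0)) (hc_pos : ∀ x > (0:ℝ), 0 < c x)
    (hψ_diff : ∀ x > (0:ℝ), DifferentiableAt ℝ ψ x)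
    (hψ_L2 : IntegrableOn (fun x => ψ x ^ 2) (Ioi 0)) {m A : ℝ} (hm : 0 < m) (hA : 0 < A)
    (hflux : ∀ x ∈ Ioc 0 m, c x * deriv ψ x ≤ -A) :
    MemLp (nuPlus c) 2 (volume.restrict (Ioc 0 1)) := by
  have hψ_cont : ContinuousOn ψ (Ioc 0 1) :=
    fun x hx => (hψ_diff x hx.1).continuousAt.continuousWithinAt
  have hψ : MemLp ψ 2 (volume.restrict (Ioc 0 1)) :=
    (memLp_two_iff_integrable_sq (hψ_cont.aestronglyMeasurable measurableSet_Ioc)).2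
      (hψ_L2.mono_set Ioc_subset_Ioi_self)
  have hν_cont : ContinuousOn (nuPlus c) (Ioc 0 1) :=
    fun x hx => (hasDerivAt_nuPlus hc_cont hc_pos hx.1).continuousAt.continuousWithinAt
  refine ((hψ.norm.const_mul A⁻¹).add (memLp_const (A⁻¹ * |ψ m| + nuPlus c m))).mono'
    (hν_cont.aestronglyMeasurable measurableSet_Ioc)
    ((ae_restrict_mem measurableSet_Ioc).mono fun x hx => ?_)
  rw [Real.norm_of_nonneg (nuPlus_nonneg hc_pos hx.1 hx.2)]
  exact nuPlus_le hc_cont hc_pos hψ_diff hm hA hflux hx.1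

lemma nonpos_of_lintegral_nuPlus_sq_eq_top (hc_cont : ContinuousOn c (Ioi 0))
    (hc_pos : ∀ x > (0:ℝ), 0 < c x)
    (hν : ∫⁻ x in Ioc 0 1, ENNReal.ofReal (nuPlus c x ^ 2) = ⊤)
    (hψ_diff : ∀ x > (0:ℝ), DifferentiableAt ℝ ψ x)
    (hψ_L2 : IntegrableOn (fun x => ψ x ^ 2) (Ioi 0))
    (hode : ∀ x > (0:ℝ), HasDerivAt (fun y => c y * deriv ψ y) (ψ x) x) {x : ℝ} (hx : 0 < x) :
    ψ x ≤ 0 := by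
  by_contra! hψx
  obtain ⟨m, hm, A, hA, hflux⟩ := exists_flux_le_neg hc_pos hψ_diff hψ_L2 hode hx hψx
  exact (memLp_nuPlus hc_cont hc_pos hψ_diff hψ_L2 hm hA hflux).integrable_sq.lintegral_lt_top.ne hν

end Solution

/-- Paper: core of the proof of Proposition 2.1(i). If ν₊ ∉ L²(0,1) then the
only L²-solution of (cψ')' = ψ on (0,∞) is ψ = 0. -/
theorem stmt_7 (c : ℝ → ℝ)
    (hc_cont : ContinuousOn c (Set.Ioi 0))
    (hc_pos : ∀ x > (0:ℝ), 0 < c x)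
    (hν : ∫⁻ x in Set.Ioc (0:ℝ) 1,
      ENNReal.ofReal ((∫ s in x..1, (c s)⁻¹) ^ 2) = ⊤)
    (ψ : ℝ → ℝ)
    (hψ_diff : ∀ x > (0:ℝ), DifferentiableAt ℝ ψ x)
    (hψ_L2 : MeasureTheory.IntegrableOn (fun x => (ψ x) ^ 2) (Set.Ioi 0))
    (hode : ∀ x > (0:ℝ), HasDerivAt (fun y => c y * deriv ψ y) (ψ x) x) :
    ∀ x > (0:ℝ), ψ x = 0 := by
  intro x hx
  have hneg : -ψ x ≤ 0 :=
    nonpos_of_lintegral_nuPlus_sq_eq_top (ψ := fun y => -ψ y) hc_cont hc_pos hν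
      (fun y hy => (hψ_diff y hy).neg) (by simpa using hψ_L2)
      (fun y hy => by simpa only [deriv.fun_neg, mul_neg] using (hode y hy).fun_neg) hx
  exact le_antisymm
    (nonpos_of_lintegral_nuPlus_sq_eq_top hc_cont hc_pos hν hψ_diff hψ_L2 hode hx) (by linarith)
end

section
/- Assume ∫₀¹ ν₊(x)² dx < ∞. Let Φ : (0,∞) → ℝ be differentiable with ∫₀^∞ Φ(x)² dx < ∞, and suppose x ↦ c(x)Φ'(x) is differentiable on (0,∞) with derivative g satisfying ∫₀^∞ g(x)² dx < ∞. Then the limit b := lim_{x→0⁺} c(x)Φ'(x) exists (as a real number), and the limit lim_{x→0⁺} (Φ(x) + b·ν₊(x)) also exists as a real number. -/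
/-
Write F = cΦ' and ν = ν₊. Since F' = g is square integrable, hence integrable, on (0,1], F has a
limit b at 0⁺ and F(s) - b = ∫₀ˢ g. The function Φ + bν has derivative (F - b)/c, which is
integrable on (0,1] by Tonelli and Cauchy–Schwarz:
  ∫₀¹ |F(s) - b| / c(s) ds ≤ ∫₀¹ (∫₀ˢ |g|) c(s)⁻¹ ds = ∫₀¹ |g(t)| ν(t) dt ≤ ‖g‖₂ ‖ν‖₂.
A function whose derivative is integrable on (0,1] has a limit at 0⁺.
-/

open MeasureTheory Filter Set Topology
open scoped ENNReal

section LeftEndpoint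

variable {E : Type*} [NormedAddCommGroup E] [NormedSpace ℝ E] {a b : ℝ}

theorem tendsto_intervalIntegral_nhdsGT_left {f : ℝ → E} (hab : a < b)
    (hf : IntegrableOn f (Ioc a b)) :
    Tendsto (fun x => ∫ t in x..b, f t) (𝓝[>] a) (𝓝 (∫ t in a..b, f t)) := by
  rw [← integrableOn_Icc_iff_integrableOn_Ioc, ← uIcc_of_le hab.le] at hf
  have hcont := intervalIntegral.continuousOn_primitive_interval_left hf a left_mem_uIcc
  rw [uIcc_of_le hab.le, ← nhdsWithin_Ioc_eq_nhdsGT hab] at *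
  exact hcont.tendsto.mono_left (nhdsWithin_mono _ Ioc_subset_Icc_self)

theorem tendsto_nhdsGT_of_hasDerivAt_of_integrableOn [CompleteSpace E] {F f : ℝ → E}
    (hab : a < b) (hF : ∀ x ∈ Ioc a b, HasDerivAt F (f x) x) (hf : IntegrableOn f (Ioc a b)) :
    Tendsto F (𝓝[>] a) (𝓝 (F b - ∫ t in a..b, f t)) := by
  refine (tendsto_const_nhds.sub (tendsto_intervalIntegral_nhdsGT_left hab hf)).congr' ?_
  filter_upwards [Ioc_mem_nhdsGT hab] with x hx
  have hsub : uIcc x b ⊆ Ioc a b := by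
    rw [uIcc_of_le hx.2]; exact Icc_subset_Ioc hx.1 le_rfl
  rw [intervalIntegral.integral_eq_sub_of_hasDerivAt (fun t ht => hF t (hsub ht))
    ((intervalIntegrable_iff_integrableOn_Ioc_of_le hx.2).2
      (hf.mono_set (Ioc_subset_Ioc_left hx.1.le))), sub_sub_cancel]

theorem sub_eq_intervalIntegral_of_hasDerivAt_of_integrableOn [CompleteSpace E] {F f : ℝ → E}
    {x : ℝ} (hF : ∀ x ∈ Ioc a b, HasDerivAt F (f x) x) (hf : IntegrableOn f (Ioc a b))
    (hx : x ∈ Ioc a b) :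
    F x - (F b - ∫ t in a..b, f t) = ∫ t in a..x, f t :=
  (intervalIntegral.integral_eq_sub_of_hasDerivAt_of_tendsto hx.1
    (fun t ht => hF t ⟨ht.1, ht.2.le.trans hx.2⟩)
    ((intervalIntegrable_iff_integrableOn_Ioc_of_le hx.1.le).2
      (hf.mono_set (Ioc_subset_Ioc_right hx.2)))
    (tendsto_nhdsGT_of_hasDerivAt_of_integrableOn (hx.1.trans_le hx.2) hF hf)
    ((hF x hx).continuousAt.tendsto.mono_left nhdsWithin_le_nhds)).symm

theorem ContinuousOn.hasDerivAt_intervalIntegral_left [CompleteSpace E] {f : ℝ → E} {s : Set ℝ}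
    {x : ℝ} (hf : ContinuousOn f s) (hs : IsOpen s) (hxb : uIcc x b ⊆ s) :
    HasDerivAt (fun u => ∫ t in u..b, f t) (-f x) x :=
  intervalIntegral.integral_hasDerivAt_left ((hf.mono hxb).intervalIntegrable)
    (hf.stronglyMeasurableAtFilter hs x (hxb left_mem_uIcc))
    (hf.continuousAt (hs.mem_nhds (hxb left_mem_uIcc)))

end LeftEndpoint

theorem setLIntegral_Ioc_mul_swap {a b : ℝ} {G C : ℝ → ℝ≥0∞}
    (hG : AEMeasurable G (volume.restrict (Ioc a b)))
    (hC : AEMeasurable C (volume.restrict (Ioc a b))) :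
    ∫⁻ s in Ioc a b, (∫⁻ t in Ioc a s, G t) * C s =
      ∫⁻ t in Ioc a b, G t * ∫⁻ s in Ioc t b, C s := by
  set μ := volume.restrict (Ioc a b)
  have hmeas : AEMeasurable (Function.uncurry fun s t => C s * (Iic s).indicator G t) (μ.prod μ) :=
    hC.comp_fst.mul (hG.comp_snd.indicator (measurableSet_le measurable_snd measurable_fst))
  calc ∫⁻ s in Ioc a b, (∫⁻ t in Ioc a s, G t) * C s
      = ∫⁻ s, ∫⁻ t, C s * (Iic s).indicator G t ∂μ ∂μ := by
        refine setLIntegral_congr_fun measurableSet_Ioc fun s hs => ?_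
        rw [lintegral_const_mul'' _ (hG.indicator measurableSet_Iic),
          lintegral_indicator measurableSet_Iic, Measure.restrict_restrict measurableSet_Iic,
          Iic_inter_Ioc_of_le hs.2, mul_comm]
    _ = ∫⁻ t, ∫⁻ s, C s * (Iic s).indicator G t ∂μ ∂μ := lintegral_lintegral_swap hmeas
    _ = ∫⁻ t in Ioc a b, G t * ∫⁻ s in Ioc t b, C s := by
        refine setLIntegral_congr_fun measurableSet_Ioc fun t ht => ?_
        have hswap : ∀ s, C s * (Iic s).indicator G t = (Ici t).indicator C s * G t := by
          intro s
          by_cases hts : t ≤ s <;> simp [indicator, hts, mul_comm]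
        have hIcc : Ici t ∩ Ioc a b = Icc t b :=
          ext fun s => ⟨fun h => ⟨h.1, h.2.2⟩, fun h => ⟨h.1, ht.1.trans_le h.1, h.2⟩⟩
        simp_rw [hswap]
        rw [lintegral_mul_const'' _ (hC.indicator measurableSet_Ici),
          lintegral_indicator measurableSet_Ici, Measure.restrict_restrict measurableSet_Ici,
          hIcc, setLIntegral_congr Ioc_ae_eq_Icc.symm, mul_comm]

theorem integrableOn_integral_Ioc_mul {a b : ℝ} {G C : ℝ → ℝ}
    (hG : IntegrableOn G (Ioc a b)) (hG0 : ∀ t ∈ Ioc a b, 0 ≤ G t)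
    (hCm : AEStronglyMeasurable C (volume.restrict (Ioc a b)))
    (hC : ∀ t ∈ Ioc a b, IntegrableOn C (Ioc t b)) (hC0 : ∀ s ∈ Ioc a b, 0 ≤ C s)
    (hGC : IntegrableOn (fun t => G t * ∫ s in Ioc t b, C s) (Ioc a b)) :
    IntegrableOn (fun s => (∫ t in Ioc a s, G t) * C s) (Ioc a b) := by
  have hG_Ioc : ∀ s ∈ Ioc a b, IntegrableOn G (Ioc a s) := fun s hs =>
    hG.mono_set (Ioc_subset_Ioc_right hs.2)
  have hG_nonneg : ∀ s ∈ Ioc a b, 0 ≤ᵐ[volume.restrict (Ioc a s)] G := fun s hs =>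
    ae_restrict_of_forall_mem measurableSet_Ioc fun t ht => hG0 t ⟨ht.1, ht.2.trans hs.2⟩
  have hC_nonneg : ∀ t ∈ Ioc a b, 0 ≤ᵐ[volume.restrict (Ioc t b)] C := fun t ht =>
    ae_restrict_of_forall_mem measurableSet_Ioc fun s hs => hC0 s ⟨ht.1.trans hs.1, hs.2⟩
  have hprim_mono : MonotoneOn (fun s => ∫ t in Ioc a s, G t) (Ioc a b) :=
    fun s₁ _ s₂ hs₂ hs => setIntegral_mono_set (hG_Ioc s₂ hs₂) (hG_nonneg s₂ hs₂)
      (Ioc_subset_Ioc_right hs).eventuallyLE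
  refine ⟨((aemeasurable_restrict_of_monotoneOn measurableSet_Ioc hprim_mono).mul
    hCm.aemeasurable).aestronglyMeasurable, ?_⟩
  have hlhs : ∀ s ∈ Ioc a b, ‖(∫ t in Ioc a s, G t) * C s‖ₑ =
      (∫⁻ t in Ioc a s, ENNReal.ofReal (G t)) * ENNReal.ofReal (C s) := fun s hs => by
    rw [enorm_mul, Real.enorm_eq_ofReal (integral_nonneg_of_ae (hG_nonneg s hs)),
      Real.enorm_eq_ofReal (hC0 s hs),
      ofReal_integral_eq_lintegral_ofReal (hG_Ioc s hs) (hG_nonneg s hs)]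
  have hrhs : ∀ t ∈ Ioc a b, ‖G t * ∫ s in Ioc t b, C s‖ₑ =
      ENNReal.ofReal (G t) * ∫⁻ s in Ioc t b, ENNReal.ofReal (C s) := fun t ht => by
    rw [enorm_mul, Real.enorm_eq_ofReal (hG0 t ht),
      Real.enorm_eq_ofReal (integral_nonneg_of_ae (hC_nonneg t ht)),
      ofReal_integral_eq_lintegral_ofReal (hC t ht) (hC_nonneg t ht)]
  unfold HasFiniteIntegral
  calc ∫⁻ s in Ioc a b, ‖(∫ t in Ioc a s, G t) * C s‖ₑ
      = ∫⁻ s in Ioc a b, (∫⁻ t in Ioc a s, ENNReal.ofReal (G t)) * ENNReal.ofReal (C s) :=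
        setLIntegral_congr_fun measurableSet_Ioc hlhs
    _ = ∫⁻ t in Ioc a b, ENNReal.ofReal (G t) * ∫⁻ s in Ioc t b, ENNReal.ofReal (C s) :=
        setLIntegral_Ioc_mul_swap hG.aemeasurable.ennreal_ofReal hCm.aemeasurable.ennreal_ofReal
    _ = ∫⁻ t in Ioc a b, ‖G t * ∫ s in Ioc t b, C s‖ₑ :=
        (setLIntegral_congr_fun measurableSet_Ioc hrhs).symm
    _ < ⊤ := hGC.hasFiniteIntegral

theorem integrableOn_intervalIntegral_div {a b : ℝ} {g c : ℝ → ℝ}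
    (hc_cont : ContinuousOn c (Ioc a b)) (hc_pos : ∀ x ∈ Ioc a b, 0 < c x)
    (hg : MemLp g 2 (volume.restrict (Ioc a b)))
    (hν : MemLp (fun x => ∫ s in x..b, (c s)⁻¹) 2 (volume.restrict (Ioc a b))) :
    IntegrableOn (fun s => (∫ t in a..s, g t) / c s) (Ioc a b) := by
  rcases lt_or_ge b a with hba | hab
  · simp [Ioc_eq_empty_of_le hba.le]
  have hg_int : IntegrableOn g (Ioc a b) := hg.integrable one_le_two
  have hcinv_cont : ContinuousOn (fun s => (c s)⁻¹) (Ioc a b) :=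
    hc_cont.inv₀ fun x hx => (hc_pos x hx).ne'
  have hcinv_int : ∀ t ∈ Ioc a b, IntegrableOn (fun s => (c s)⁻¹) (Ioc t b) := fun t ht =>
    ((hcinv_cont.mono (Icc_subset_Ioc ht.1 le_rfl)).integrableOn_Icc).mono_set Ioc_subset_Icc_self
  have hgν : IntegrableOn (fun t => |g t| * ∫ s in Ioc t b, (c s)⁻¹) (Ioc a b) := by
    refine (hg.abs.integrable_mul hν).congr (ae_restrict_of_forall_mem measurableSet_Ioc
      fun t ht => ?_)
    simp only [Pi.mul_apply, Pi.abs_apply, intervalIntegral.integral_of_le ht.2]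
  have hdom := integrableOn_integral_Ioc_mul hg_int.abs (fun t _ => abs_nonneg (g t))
    (hcinv_cont.aestronglyMeasurable measurableSet_Ioc) hcinv_int
    (fun s hs => inv_nonneg.2 (hc_pos s hs).le) hgν
  have hprim_cont : ContinuousOn (fun s => ∫ t in a..s, g t) (Ioc a b) := by
    rw [← integrableOn_Icc_iff_integrableOn_Ioc, ← uIcc_of_le hab] at hg_int
    exact (intervalIntegral.continuousOn_primitive_interval hg_int).mono
      (uIcc_of_le hab ▸ Ioc_subset_Icc_self)
  refine hdom.mono' ((hprim_cont.div hc_cont fun x hx => (hc_pos x hx).ne').aestronglyMeasurable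
    measurableSet_Ioc) (ae_restrict_of_forall_mem measurableSet_Ioc fun s hs => ?_)
  rw [norm_div, Real.norm_of_nonneg (hc_pos s hs).le, div_eq_mul_inv]
  refine mul_le_mul_of_nonneg_right ?_ (inv_nonneg.2 (hc_pos s hs).le)
  simpa only [uIoc_of_le hs.1.le, Real.norm_eq_abs] using
    intervalIntegral.norm_integral_le_integral_norm_uIoc (f := g) (a := a) (b := s)

theorem stmt_8_general (c : ℝ → ℝ)
    (hc_cont : ContinuousOn c (Set.Ioi 0))
    (hc_pos : ∀ x > (0:ℝ), 0 < c x)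
    (hν_L2 : MeasureTheory.IntegrableOn
      (fun x => (∫ s in x..1, (c s)⁻¹) ^ 2) (Set.Ioc 0 1))
    (Φ g : ℝ → ℝ)
    (hΦ_diff : ∀ x > (0:ℝ), DifferentiableAt ℝ Φ x)
    (hg : ∀ x > (0:ℝ), HasDerivAt (fun y => c y * deriv Φ y) (g x) x)
    (hg_L2 : MeasureTheory.IntegrableOn (fun x => (g x) ^ 2) (Set.Ioi 0)) :
    ∃ b : ℝ,
      Filter.Tendsto (fun x => c x * deriv Φ x)
        (nhdsWithin 0 (Set.Ioi 0)) (nhds b) ∧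
      ∃ a : ℝ,
        Filter.Tendsto (fun x => Φ x + b * ∫ s in x..1, (c s)⁻¹)
          (nhdsWithin 0 (Set.Ioi 0)) (nhds a) := by
  have hcinv_cont : ContinuousOn (fun s => (c s)⁻¹) (Ioi 0) :=
    hc_cont.inv₀ fun x hx => (hc_pos x hx).ne'
  have hg_meas : AEStronglyMeasurable g (volume.restrict (Ioc 0 1)) :=
    (aestronglyMeasurable_deriv _ _).congr
      (ae_restrict_of_forall_mem measurableSet_Ioc fun x hx => (hg x hx.1).deriv)
  have hg_mem : MemLp g 2 (volume.restrict (Ioc 0 1)) :=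
    (memLp_two_iff_integrable_sq hg_meas).2 (hg_L2.mono_set Ioc_subset_Ioi_self)
  have hg_int : IntegrableOn g (Ioc 0 1) := hg_mem.integrable one_le_two
  have hF_lim := tendsto_nhdsGT_of_hasDerivAt_of_integrableOn zero_lt_one
    (fun x hx => hg x hx.1) hg_int
  set b := c 1 * deriv Φ 1 - ∫ t in (0:ℝ)..1, g t
  have hν_deriv : ∀ x ∈ Ioc (0:ℝ) 1,
      HasDerivAt (fun x => ∫ s in x..1, (c s)⁻¹) (-(c x)⁻¹) x := fun x hx =>
    hcinv_cont.hasDerivAt_intervalIntegral_left isOpen_Ioi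
      fun t ht => hx.1.trans_le (uIcc_of_le hx.2 ▸ ht).1
  have hν_mem : MemLp (fun x => ∫ s in x..1, (c s)⁻¹) 2 (volume.restrict (Ioc 0 1)) :=
    (memLp_two_iff_integrable_sq (ContinuousOn.aestronglyMeasurable
      (fun x hx => (hν_deriv x hx).continuousAt.continuousWithinAt) measurableSet_Ioc)).2 hν_L2
  have h_int : IntegrableOn (fun s => (c s * deriv Φ s - b) / c s) (Ioc 0 1) :=
    (integrableOn_intervalIntegral_div (hc_cont.mono Ioc_subset_Ioi_self)
      (fun x hx => hc_pos x hx.1) hg_mem hν_mem).congr_fun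
      (fun s hs => by
        rw [sub_eq_intervalIntegral_of_hasDerivAt_of_integrableOn
          (fun x hx => hg x hx.1) hg_int hs]) measurableSet_Ioc
  have hH_deriv : ∀ x ∈ Ioc (0:ℝ) 1, HasDerivAt (fun x => Φ x + b * ∫ s in x..1, (c s)⁻¹)
      ((c x * deriv Φ x - b) / c x) x := fun x hx =>
    ((hΦ_diff x hx.1).hasDerivAt.add ((hν_deriv x hx).const_mul b)).congr_deriv (by
      rw [sub_div, mul_div_cancel_left₀ _ (hc_pos x hx.1).ne', div_eq_mul_inv]
      ring)
  exact ⟨b, hF_lim, _, tendsto_nhdsGT_of_hasDerivAt_of_integrableOn zero_lt_one hH_deriv h_int⟩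

/-- Paper: analytic content of Proposition 2.7. If ν₊ ∈ L²(0,1) and Φ lies in
the domain of H₊*, then b := (cΦ')(0⁺) exists and Φ(x) + b·ν₊(x) has a finite
limit as x → 0⁺. -/
theorem stmt_8 (c : ℝ → ℝ)
    (hc_cont : ContinuousOn c (Set.Ioi 0))
    (hc_pos : ∀ x > (0:ℝ), 0 < c x)
    (hν_L2 : MeasureTheory.IntegrableOn
      (fun x => (∫ s in x..1, (c s)⁻¹) ^ 2) (Set.Ioc 0 1))
    (Φ g : ℝ → ℝ)
    (hΦ_diff : ∀ x > (0:ℝ), DifferentiableAt ℝ Φ x)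
    (hΦ_L2 : MeasureTheory.IntegrableOn (fun x => (Φ x) ^ 2) (Set.Ioi 0))
    (hg : ∀ x > (0:ℝ), HasDerivAt (fun y => c y * deriv Φ y) (g x) x)
    (hg_L2 : MeasureTheory.IntegrableOn (fun x => (g x) ^ 2) (Set.Ioi 0)) :
    ∃ b : ℝ,
      Filter.Tendsto (fun x => c x * deriv Φ x)
        (nhdsWithin 0 (Set.Ioi 0)) (nhds b) ∧
      ∃ a : ℝ,
        Filter.Tendsto (fun x => Φ x + b * ∫ s in x..1, (c s)⁻¹)
          (nhdsWithin 0 (Set.Ioi 0)) (nhds a) :=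
  stmt_8_general c hc_cont hc_pos hν_L2 Φ g hΦ_diff hg hg_L2
end

section
/- Assume ∫₀¹ ν₊(x)² dx < ∞. Let F : (0,1) → ℝ be measurable with ∫₀¹ F(t)² dt < ∞. Then for every x ∈ (0,1]: ∫₀ˣ c(s)⁻¹·(∫₀ˢ |F(t)| dt) ds < ∞, and |∫₀ˣ c(s)⁻¹·(∫₀ˢ F(t) dt) ds| ≤ (∫₀¹ ν₊(t)² dt)^{1/2} · (∫₀ˣ F(t)² dt)^{1/2}. -/
/-!
With `G t = ∫ₜˣ c⁻¹`, Fubini on the triangle `{t ≤ s} ⊆ (0, x]²` rewrites the left-hand side as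
`∫₀ˣ G F`. The kernel `c(s)⁻¹ |F t|` on that triangle is integrable because its `s`-sections
integrate to `G |F|`, and `0 ≤ G ≤ ν₊` with `ν₊, F ∈ L²`; its `t`-sections give the first claim.
Cauchy–Schwarz together with `G ≤ ν₊` gives the bound.
-/

open MeasureTheory Filter Set Topology

theorem abs_integral_mul_le_sqrt_mul_sqrt {α : Type*} [MeasurableSpace α] {μ : Measure α}
    {f g : α → ℝ} (hf : MemLp f 2 μ) (hg : MemLp g 2 μ) :
    |∫ a, f a * g a ∂μ| ≤ √(∫ a, f a ^ 2 ∂μ) * √(∫ a, g a ^ 2 ∂μ) := by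
  have hsq : ∀ y : ℝ, ‖y‖ ^ (2 : ℝ) = y ^ 2 := fun y => by
    rw [Real.rpow_two, Real.norm_eq_abs, sq_abs]
  have holder := integral_mul_norm_le_Lp_mul_Lq Real.HolderConjugate.two_two
    (ENNReal.ofReal_ofNat 2 ▸ hf) (ENNReal.ofReal_ofNat 2 ▸ hg)
  simp only [hsq, ← Real.sqrt_eq_rpow] at holder
  calc |∫ a, f a * g a ∂μ| ≤ ∫ a, ‖f a‖ * ‖g a‖ ∂μ := by
        simpa only [Real.norm_eq_abs, norm_mul] using
          norm_integral_le_integral_norm (fun a => f a * g a)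
    _ ≤ _ := holder

theorem continuousOn_intervalIntegral_left {w : ℝ → ℝ} (hw : ContinuousOn w (Ioi 0)) {b : ℝ}
    (hb : 0 < b) : ContinuousOn (fun t => ∫ s in t..b, w s) (Ioi 0) := by
  intro t ht
  have hsub : uIcc t b ⊆ Ioi 0 := fun s hs => lt_of_lt_of_le (lt_min ht hb) hs.1
  refine (intervalIntegral.integral_hasDerivAt_left ((hw.mono hsub).intervalIntegrable)
    (hw.stronglyMeasurableAtFilter isOpen_Ioi t ht)
    (hw.continuousAt (isOpen_Ioi.mem_nhds ht))).continuousAt.continuousWithinAt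

theorem Ioc_inter_Ici_of_lt {a b t : ℝ} (h : a < t) : Ioc a b ∩ Ici t = Icc t b := by
  ext s
  simp only [mem_inter_iff, mem_Ioc, mem_Ici, mem_Icc]
  grind

noncomputable def triangleKernel (w F : ℝ → ℝ) : ℝ × ℝ → ℝ :=
  {p : ℝ × ℝ | p.2 ≤ p.1}.indicator fun p => w p.1 * F p.2

namespace triangleKernel

variable {w F : ℝ → ℝ} {a b : ℝ}

theorem eq_indicator_Iic (s : ℝ) :
    (fun t => triangleKernel w F (s, t)) = (Iic s).indicator fun t => w s * F t := by
  ext t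
  simp [triangleKernel, indicator_apply]

theorem eq_indicator_Ici (t : ℝ) :
    (fun s => triangleKernel w F (s, t)) = (Ici t).indicator fun s => w s * F t := by
  ext s
  simp [triangleKernel, indicator_apply]

theorem setIntegral_snd {s : ℝ} (hs : s ≤ b) :
    ∫ t in Ioc a b, triangleKernel w F (s, t) = w s * ∫ t in Ioc a s, F t := by
  rw [eq_indicator_Iic, setIntegral_indicator measurableSet_Iic,
    Ioc_inter_Iic, min_eq_right hs, integral_const_mul]

theorem setIntegral_fst {t : ℝ} (ht : t ∈ Ioc a b) :
    ∫ s in Ioc a b, triangleKernel w F (s, t) = (∫ s in t..b, w s) * F t := by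
  rw [eq_indicator_Ici, setIntegral_indicator measurableSet_Ici, Ioc_inter_Ici_of_lt ht.1,
    integral_mul_const, integral_Icc_eq_integral_Ioc, intervalIntegral.integral_of_le ht.2]

theorem norm_eq_of_nonneg {s : ℝ} (hs : 0 ≤ w s) (t : ℝ) :
    ‖triangleKernel w F (s, t)‖ = triangleKernel w (fun t => |F t|) (s, t) := by
  by_cases h : t ≤ s <;> simp [triangleKernel, h, abs_of_nonneg hs]

theorem aestronglyMeasurable (hw : AEStronglyMeasurable w (volume.restrict (Ioc a b)))
    (hF : AEStronglyMeasurable F (volume.restrict (Ioc a b))) :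
    AEStronglyMeasurable (triangleKernel w F)
      ((volume.restrict (Ioc a b)).prod (volume.restrict (Ioc a b))) :=
  ((hw.comp_fst.mul hF.comp_snd).aemeasurable.indicator
    (measurableSet_le measurable_snd measurable_fst)).aestronglyMeasurable

theorem integrable (hw_nonneg : ∀ s ∈ Ioc a b, 0 ≤ w s)
    (hw : ∀ t ∈ Ioc a b, IntegrableOn w (Icc t b))
    (hw_meas : AEStronglyMeasurable w (volume.restrict (Ioc a b)))
    (hF : AEStronglyMeasurable F (volume.restrict (Ioc a b)))
    (hwF : IntegrableOn (fun t => (∫ s in t..b, w s) * |F t|) (Ioc a b)) :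
    Integrable (triangleKernel w F)
      ((volume.restrict (Ioc a b)).prod (volume.restrict (Ioc a b))) := by
  refine (integrable_prod_iff' (aestronglyMeasurable hw_meas hF)).2 ⟨?_, ?_⟩
  · filter_upwards [ae_restrict_mem measurableSet_Ioc] with t ht
    rw [eq_indicator_Ici, integrable_indicator_iff measurableSet_Ici, IntegrableOn,
      Measure.restrict_restrict measurableSet_Ici, inter_comm, Ioc_inter_Ici_of_lt ht.1]
    exact (hw t ht).mul_const _
  · refine hwF.congr ?_
    filter_upwards [ae_restrict_mem measurableSet_Ioc] with t ht
    rw [← setIntegral_fst (F := fun t => |F t|) ht]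
    exact setIntegral_congr_fun measurableSet_Ioc fun s hs =>
      (norm_eq_of_nonneg (hw_nonneg s hs) t).symm

end triangleKernel

section Fubini

variable {w F : ℝ → ℝ} {a b : ℝ}

theorem integral_mul_primitive_Ioc_eq (hw_nonneg : ∀ s ∈ Ioc a b, 0 ≤ w s)
    (hw : ∀ t ∈ Ioc a b, IntegrableOn w (Icc t b))
    (hw_meas : AEStronglyMeasurable w (volume.restrict (Ioc a b)))
    (hF : AEStronglyMeasurable F (volume.restrict (Ioc a b)))
    (hwF : IntegrableOn (fun t => (∫ s in t..b, w s) * |F t|) (Ioc a b)) :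
    ∫ s in Ioc a b, w s * ∫ t in Ioc a s, F t = ∫ t in Ioc a b, (∫ s in t..b, w s) * F t := by
  calc ∫ s in Ioc a b, w s * ∫ t in Ioc a s, F t
      = ∫ s in Ioc a b, ∫ t in Ioc a b, triangleKernel w F (s, t) :=
        setIntegral_congr_fun measurableSet_Ioc fun s hs =>
          (triangleKernel.setIntegral_snd hs.2).symm
    _ = ∫ t in Ioc a b, ∫ s in Ioc a b, triangleKernel w F (s, t) :=
        integral_integral_swap (triangleKernel.integrable hw_nonneg hw hw_meas hF hwF)
    _ = ∫ t in Ioc a b, (∫ s in t..b, w s) * F t :=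
        setIntegral_congr_fun measurableSet_Ioc fun t ht => triangleKernel.setIntegral_fst ht

theorem integrableOn_mul_primitive_abs_Ioc (hw_nonneg : ∀ s ∈ Ioc a b, 0 ≤ w s)
    (hw : ∀ t ∈ Ioc a b, IntegrableOn w (Icc t b))
    (hw_meas : AEStronglyMeasurable w (volume.restrict (Ioc a b)))
    (hF : AEStronglyMeasurable F (volume.restrict (Ioc a b)))
    (hwF : IntegrableOn (fun t => (∫ s in t..b, w s) * |F t|) (Ioc a b)) :
    IntegrableOn (fun s => w s * ∫ t in Ioc a s, |F t|) (Ioc a b) := by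
  have hK := triangleKernel.integrable (F := fun t => |F t|) hw_nonneg hw hw_meas hF.norm
    (by simpa only [abs_abs] using hwF)
  refine hK.integral_prod_left.congr ?_
  filter_upwards [ae_restrict_mem measurableSet_Ioc] with s hs
  exact triangleKernel.setIntegral_snd hs.2

end Fubini


section Weight

variable {w : ℝ → ℝ}

theorem abs_intervalIntegral_le_intervalIntegral_one (hw : ContinuousOn w (Ioi 0))
    (hw_nonneg : ∀ s ∈ Ioi (0 : ℝ), 0 ≤ w s) {t x : ℝ} (ht : t ∈ Ioc 0 x) (hx : x ≤ 1) :
    |∫ s in t..x, w s| ≤ ∫ s in t..1, w s := by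
  have hpos : ∀ s ∈ Icc t 1, 0 ≤ w s := fun s hs => hw_nonneg s (ht.1.trans_le hs.1)
  rw [abs_of_nonneg
    (intervalIntegral.integral_nonneg ht.2 fun s hs => hpos s ⟨hs.1, hs.2.trans hx⟩)]
  refine intervalIntegral.integral_mono_interval le_rfl ht.2 hx ?_
    ((hw.mono fun s hs => ht.1.trans_le hs.1).intervalIntegrable_of_Icc (ht.2.trans hx))
  filter_upwards [ae_restrict_mem measurableSet_Ioc] with s hs
  exact hpos s (Ioc_subset_Icc_self hs)

theorem memLp_two_intervalIntegral_and_integral_sq_le (hw : ContinuousOn w (Ioi 0))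
    (hw_nonneg : ∀ s ∈ Ioi (0 : ℝ), 0 ≤ w s)
    (hν : IntegrableOn (fun t => (∫ s in t..1, w s) ^ 2) (Ioc 0 1)) {x : ℝ}
    (hx : x ∈ Ioc 0 1) :
    MemLp (fun t => ∫ s in t..x, w s) 2 (volume.restrict (Ioc 0 x)) ∧
      ∫ t in Ioc 0 x, (∫ s in t..x, w s) ^ 2 ≤ ∫ t in Ioc 0 1, (∫ s in t..1, w s) ^ 2 := by
  have hsub : Ioc 0 x ⊆ Ioc 0 1 := Ioc_subset_Ioc_right hx.2
  have hmeas : ∀ b > 0,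
      AEStronglyMeasurable (fun t => ∫ s in t..b, w s) (volume.restrict (Ioc 0 x)) := fun b hb =>
    ((continuousOn_intervalIntegral_left hw hb).mono Ioc_subset_Ioi_self).aestronglyMeasurable
      measurableSet_Ioc
  have hle : ∀ᵐ t ∂(volume.restrict (Ioc 0 x)), |∫ s in t..x, w s| ≤ ∫ s in t..1, w s := by
    filter_upwards [ae_restrict_mem measurableSet_Ioc] with t ht
    exact abs_intervalIntegral_le_intervalIntegral_one hw hw_nonneg ht hx.2
  have hνx : MemLp (fun t => ∫ s in t..1, w s) 2 (volume.restrict (Ioc 0 x)) :=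
    (memLp_two_iff_integrable_sq (hmeas 1 one_pos)).2 (hν.mono_set hsub)
  have hG : MemLp (fun t => ∫ s in t..x, w s) 2 (volume.restrict (Ioc 0 x)) :=
    hνx.mono' (hmeas x hx.1) hle
  refine ⟨hG, ?_⟩
  calc ∫ t in Ioc 0 x, (∫ s in t..x, w s) ^ 2 ≤ ∫ t in Ioc 0 x, (∫ s in t..1, w s) ^ 2 :=
        integral_mono_ae hG.integrable_sq (hν.mono_set hsub)
          (hle.mono fun t ht => sq_le_sq.2 (ht.trans (le_abs_self _)))
    _ ≤ ∫ t in Ioc 0 1, (∫ s in t..1, w s) ^ 2 :=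
        setIntegral_mono_set hν (Eventually.of_forall fun t => sq_nonneg _) hsub.eventuallyLE

end Weight

/-- Paper: Fubini–Cauchy–Schwarz estimate in the proof of Proposition 2.7. -/
theorem stmt_9 (c : ℝ → ℝ)
    (hc_cont : ContinuousOn c (Set.Ioi 0))
    (hc_pos : ∀ x > (0:ℝ), 0 < c x)
    (hν_L2 : MeasureTheory.IntegrableOn
      (fun x => (∫ s in x..1, (c s)⁻¹) ^ 2) (Set.Ioc 0 1))
    (F : ℝ → ℝ) (hF_meas : Measurable F)
    (hF_L2 : MeasureTheory.IntegrableOn (fun t => (F t) ^ 2) (Set.Ioc 0 1)) :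
    ∀ x ∈ Set.Ioc (0:ℝ) 1,
      MeasureTheory.IntegrableOn
        (fun s => (c s)⁻¹ * ∫ t in Set.Ioc (0:ℝ) s, |F t|) (Set.Ioc 0 x) ∧
      |∫ s in Set.Ioc (0:ℝ) x, (c s)⁻¹ * ∫ t in Set.Ioc (0:ℝ) s, F t|
        ≤ Real.sqrt (∫ t in Set.Ioc (0:ℝ) 1, (∫ s in t..1, (c s)⁻¹) ^ 2)
          * Real.sqrt (∫ t in Set.Ioc (0:ℝ) x, (F t) ^ 2) := by
  intro x hx
  have hw : ContinuousOn (fun s => (c s)⁻¹) (Ioi 0) :=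
    hc_cont.inv₀ fun s hs => (hc_pos s hs).ne'
  have hw_nonneg : ∀ s ∈ Ioi (0 : ℝ), 0 ≤ (c s)⁻¹ := fun s hs => (inv_pos.2 (hc_pos s hs)).le
  have hw_nonneg_x : ∀ s ∈ Ioc 0 x, 0 ≤ (c s)⁻¹ := fun s hs => hw_nonneg s hs.1
  have hw_int : ∀ t ∈ Ioc 0 x, IntegrableOn (fun s => (c s)⁻¹) (Icc t x) :=
    fun t ht => (hw.mono fun s hs => ht.1.trans_le hs.1).integrableOn_Icc
  have hw_meas : AEStronglyMeasurable (fun s => (c s)⁻¹) (volume.restrict (Ioc 0 x)) :=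
    (hw.mono Ioc_subset_Ioi_self).aestronglyMeasurable measurableSet_Ioc
  obtain ⟨hG, hG_sq⟩ := memLp_two_intervalIntegral_and_integral_sq_le hw hw_nonneg hν_L2 hx
  have hF : MemLp F 2 (volume.restrict (Ioc 0 x)) :=
    (memLp_two_iff_integrable_sq hF_meas.aestronglyMeasurable).2
      (hF_L2.mono_set (Ioc_subset_Ioc_right hx.2))
  have hGF := hG.integrable_mul hF.abs
  refine ⟨integrableOn_mul_primitive_abs_Ioc hw_nonneg_x hw_int hw_meas hF.1 hGF, ?_⟩
  rw [integral_mul_primitive_Ioc_eq hw_nonneg_x hw_int hw_meas hF.1 hGF]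
  calc _ ≤ √(∫ t in Ioc 0 x, (∫ s in t..x, (c s)⁻¹) ^ 2) * √(∫ t in Ioc 0 x, F t ^ 2) :=
        abs_integral_mul_le_sqrt_mul_sqrt hG hF
    _ ≤ _ := by gcongr
end

section
/- Assume ∫₀¹ c(s)⁻¹ ds = ∞ (i.e. ν₊ ∉ L^∞(0,1)). Let σ₊ : (0,∞) → ℝ be smooth with 0 ≤ σ₊ ≤ 1, σ₊(x) = 1 for x ∈ (0,1) and σ₊(x) = 0 for x ≥ 2. For n ≥ 2 define χₙ : (0,∞) → ℝ by χₙ(x) = 1 for x ≤ 1/n, χₙ(x) = ν₊(x)/ν₊(1/n) for 1/n < x < 1, and χₙ(x) = 0 for x ≥ 1. Then: (a) χₙ·σ₊ is differentiable at every point of (0,∞) except possibly 1/n and 1; (b) ∫₀^∞ (χₙ(x)σ₊(x))² dx → 0 as n → ∞; and (c) ∫₀^∞ c(x)·(deriv(χₙ·σ₊)(x))² dx = ν₊(1/n)⁻¹, which tends to 0 as n → ∞. -/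
open MeasureTheory Filter Set Topology

/-!
Write `ν x = ∫ s in x..1, (c s)⁻¹`. Since `χ n` vanishes on `[1, ∞)` and `σ = 1` on `(0, 1)`,
`χ n * σ = χ n` on `(0, ∞)`. On `(1/n, 1)` the derivative of `χ n` is `-(c x)⁻¹ / ν (1/n)`, so
`c (χ n)'²` integrates to `ν (1/n) / ν (1/n) ^ 2`. Monotone convergence turns `∫₀¹ c⁻¹ = ∞` into
`ν x → ∞` as `x → 0⁺`; hence `χ n → 0` pointwise, and as `0 ≤ χ n ≤ 1` is supported in `(0, 1]`,
dominated convergence gives `∫ (χ n)² → 0`.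
-/

theorem tendsto_setLIntegral_Ioc_nhdsGT (g : ℝ → ENNReal) (a b : ℝ) :
    Tendsto (fun x => ∫⁻ t in Ioc x b, g t) (𝓝[>] a) (𝓝 (∫⁻ t in Ioc a b, g t)) := by
  have hG : Antitone fun x => ∫⁻ t in Ioc x b, g t :=
    fun x y hxy => lintegral_mono_set (Ioc_subset_Ioc_left hxy)
  convert hG.tendsto_nhdsGT a using 2
  refine le_antisymm ?_ (sSup_le (forall_mem_image.2 fun x hx => hG (le_of_lt hx)))
  have hunion : ⋃ k : ℕ, Ioc (a + 1 / (k + 1)) b = Ioc a b := by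
    ext x
    simp only [mem_iUnion, mem_Ioc]
    constructor
    · rintro ⟨k, hk, hxb⟩
      exact ⟨lt_of_le_of_lt (le_add_of_nonneg_right (by positivity)) hk, hxb⟩
    · rintro ⟨hax, hxb⟩
      obtain ⟨k, hk⟩ := exists_nat_one_div_lt (sub_pos.2 hax)
      exact ⟨k, by linarith, hxb⟩
  rw [← hunion, setLIntegral_iUnion_of_directed]
  · exact iSup_le fun k => le_sSup (mem_image_of_mem _ (lt_add_of_pos_right a (by positivity)))
  · refine Monotone.directed_le fun k l hkl => Ioc_subset_Ioc_left ?_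
    gcongr

section

variable {f : ℝ → ℝ}

theorem intervalIntegrable_of_continuousOn_Ioi (hf : ContinuousOn f (Ioi 0)) {x y : ℝ}
    (hx : 0 < x) (hy : 0 < y) : IntervalIntegrable f volume x y :=
  (hf.mono fun _ hz => lt_of_lt_of_le (lt_min hx hy) hz.1).intervalIntegrable

theorem hasDerivAt_integral_left_of_continuousOn_Ioi (hf : ContinuousOn f (Ioi 0)) {x b : ℝ}
    (hx : 0 < x) (hb : 0 < b) : HasDerivAt (fun x => ∫ s in x..b, f s) (-f x) x :=
  intervalIntegral.integral_hasDerivAt_left (intervalIntegrable_of_continuousOn_Ioi hf hx hb)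
    (hf.stronglyMeasurableAtFilter isOpen_Ioi x hx) (hf.continuousAt (Ioi_mem_nhds hx))

theorem continuousOn_integral_left_of_continuousOn_Ioi (hf : ContinuousOn f (Ioi 0)) {b : ℝ}
    (hb : 0 < b) : ContinuousOn (fun x => ∫ s in x..b, f s) (Ioi 0) := fun _ hx =>
  (hasDerivAt_integral_left_of_continuousOn_Ioi hf hx hb).continuousAt.continuousWithinAt

theorem strictAntiOn_integral_left (hf : ContinuousOn f (Ioi 0)) (hf_pos : ∀ x > 0, 0 < f x)
    {b : ℝ} (hb : 0 < b) : StrictAntiOn (fun x => ∫ s in x..b, f s) (Ioi 0) := by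
  refine strictAntiOn_of_deriv_neg (convex_Ioi 0)
    (continuousOn_integral_left_of_continuousOn_Ioi hf hb) fun x hx => ?_
  rw [interior_Ioi] at hx
  rw [(hasDerivAt_integral_left_of_continuousOn_Ioi hf hx hb).deriv]
  exact neg_neg_of_pos (hf_pos x hx)

theorem tendsto_integral_left_nhdsGT_zero (hf : ContinuousOn f (Ioi 0))
    (hf_nonneg : ∀ x > 0, 0 ≤ f x) (hdiv : ∫⁻ s in Ioc 0 1, ENNReal.ofReal (f s) = ⊤) :
    Tendsto (fun x => ∫ s in x..1, f s) (𝓝[>] 0) atTop := by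
  rw [← ENNReal.tendsto_ofReal_nhds_top, ← hdiv]
  refine (tendsto_setLIntegral_Ioc_nhdsGT _ 0 1).congr' ?_
  filter_upwards [Ioo_mem_nhdsGT one_pos] with x hx
  have hnonneg : 0 ≤ᵐ[volume.restrict (Ioc x 1)] f :=
    (ae_restrict_iff' measurableSet_Ioc).2 (ae_of_all _ fun s hs => hf_nonneg s (hx.1.trans hs.1))
  rw [intervalIntegral.integral_of_le hx.2.le, ofReal_integral_eq_lintegral_ofReal
    (intervalIntegrable_of_continuousOn_Ioi hf hx.1 one_pos).1 hnonneg]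

end

noncomputable def cutoff (F : ℝ → ℝ) (a x : ℝ) : ℝ :=
  if x ≤ a then 1 else if x < 1 then F x / F a else 0

section Cutoff

variable {F : ℝ → ℝ} {a x : ℝ}

theorem cutoff_of_le (h : x ≤ a) : cutoff F a x = 1 := if_pos h

theorem cutoff_of_mem_Ioo (h : x ∈ Ioo a 1) : cutoff F a x = F x / F a := by
  rw [cutoff, if_neg h.1.not_ge, if_pos h.2]

theorem cutoff_of_one_le (ha : a < 1) (h : 1 ≤ x) : cutoff F a x = 0 := by
  rw [cutoff, if_neg (ha.trans_le h).not_ge, if_neg h.not_gt]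

theorem eqOn_cutoff_mul {σ : ℝ → ℝ} (ha : a < 1) (hσ : ∀ x ∈ Ioo 0 1, σ x = 1) :
    EqOn (fun x => cutoff F a x * σ x) (cutoff F a) (Ioi 0) := by
  intro x (hx : 0 < x)
  rcases lt_or_ge x 1 with hx1 | hx1
  · simp only [hσ x ⟨hx, hx1⟩, mul_one]
  · simp only [cutoff_of_one_le ha hx1, zero_mul]

theorem cutoff_eq_min_max (hF : AntitoneOn F (Ioi 0)) (hF1 : F 1 = 0) (ha : 0 < a)
    (hFa : 0 < F a) (hx : 0 < x) : cutoff F a x = min 1 (max 0 (F x / F a)) := by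
  have hmono {y z : ℝ} (hy : 0 < y) (hz : 0 < z) (hyz : y ≤ z) : F z ≤ F y := hF hy hz hyz
  unfold cutoff
  split_ifs with hxa hx1
  · have : 1 ≤ F x / F a := (one_le_div hFa).2 (hmono hx ha hxa)
    rw [max_eq_right (zero_le_one.trans this), min_eq_left this]
  · have h0 : 0 ≤ F x / F a := div_nonneg (hF1 ▸ hmono hx one_pos hx1.le) hFa.le
    have h1 : F x / F a ≤ 1 := (div_le_one hFa).2 (hmono ha hx (not_le.1 hxa).le)
    rw [max_eq_right h0, min_eq_right h1]
  · have : F x / F a ≤ 0 :=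
      div_nonpos_of_nonpos_of_nonneg (hF1 ▸ hmono one_pos hx (not_lt.1 hx1)) hFa.le
    rw [max_eq_left this, min_eq_right zero_le_one]

theorem hasDerivAt_cutoff {F' : ℝ → ℝ} (ha : a < 1)
    (hF : ∀ y ∈ Ioo a 1, HasDerivAt F (F' y) y)
    (hxa : x ≠ a) (hx1 : x ≠ 1) :
    HasDerivAt (cutoff F a) ((Ioo a 1).indicator (fun y => F' y / F a) x) x := by
  rcases hxa.lt_or_gt with hxa | hxa
  · rw [indicator_of_notMem fun h => h.1.not_gt hxa]
    exact (hasDerivAt_const x 1).congr_of_eventuallyEq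
      (eventually_of_mem (Iio_mem_nhds hxa) fun y hy => cutoff_of_le (le_of_lt hy))
  rcases hx1.lt_or_gt with hx1 | hx1
  · rw [indicator_of_mem (show x ∈ Ioo a 1 from ⟨hxa, hx1⟩)]
    exact ((hF x ⟨hxa, hx1⟩).div_const (F a)).congr_of_eventuallyEq
      (eventually_of_mem (Ioo_mem_nhds hxa hx1) fun y hy => cutoff_of_mem_Ioo hy)
  · rw [indicator_of_notMem fun h => h.2.not_gt hx1]
    exact (hasDerivAt_const x 0).congr_of_eventuallyEq
      (eventually_of_mem (Ioi_mem_nhds hx1) fun y hy => cutoff_of_one_le ha (le_of_lt hy))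

theorem tendsto_cutoff_nhdsGT_zero (hF : Tendsto F (𝓝[>] 0) atTop) (hx : 0 < x) :
    Tendsto (fun a => cutoff F a x) (𝓝[>] 0) (𝓝 0) := by
  rcases lt_or_ge x 1 with hx1 | hx1
  · refine ((tendsto_const_nhds (x := F x)).div_atTop hF).congr' ?_
    filter_upwards [Ioo_mem_nhdsGT hx] with a ha
    exact (cutoff_of_mem_Ioo ⟨ha.2, hx1⟩).symm
  · refine tendsto_const_nhds.congr' ?_
    filter_upwards [Ioo_mem_nhdsGT one_pos] with a ha
    exact (cutoff_of_one_le ha.2 hx1).symm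

theorem tendsto_integral_cutoff_sq (hF : AntitoneOn F (Ioi 0)) (hFc : ContinuousOn F (Ioi 0))
    (hF1 : F 1 = 0) (hF_top : Tendsto F (𝓝[>] 0) atTop) :
    Tendsto (fun a => ∫ x in Ioi 0, cutoff F a x ^ 2) (𝓝[>] 0) (𝓝 0) := by
  have hgood : ∀ᶠ a in 𝓝[>] 0, a ∈ Ioo 0 1 ∧ 0 < F a := by
    filter_upwards [Ioo_mem_nhdsGT one_pos, hF_top.eventually_gt_atTop 0] with a ha hFa
    exact ⟨ha, hFa⟩
  have hmeas : ∀ᶠ a in 𝓝[>] 0,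
      AEStronglyMeasurable (fun x => cutoff F a x ^ 2) (volume.restrict (Ioi 0)) := by
    filter_upwards [hgood] with a ⟨ha, hFa⟩
    refine (ContinuousOn.pow ?_ 2).aestronglyMeasurable measurableSet_Ioi
    refine (continuousOn_const.inf (continuousOn_const.sup (hFc.div_const _))).congr
      fun x hx => cutoff_eq_min_max hF hF1 ha.1 hFa hx
  have hbound : ∀ᶠ a in 𝓝[>] 0, ∀ᵐ x ∂(volume.restrict (Ioi 0)),
      ‖cutoff F a x ^ 2‖ ≤ (Iio 1).indicator 1 x := by
    filter_upwards [hgood] with a ⟨ha, hFa⟩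
    refine (ae_restrict_iff' measurableSet_Ioi).2 (ae_of_all _ fun x (hx : 0 < x) => ?_)
    rcases lt_or_ge x 1 with hx1 | hx1
    · rw [indicator_of_mem (show x ∈ Iio 1 from hx1), cutoff_eq_min_max hF hF1 ha.1 hFa hx,
        Pi.one_apply, norm_pow, Real.norm_eq_abs]
      have h0 : 0 ≤ min 1 (max 0 (F x / F a)) := le_min zero_le_one (le_max_left _ _)
      rw [abs_of_nonneg h0]
      exact pow_le_one₀ h0 (min_le_left _ _)
    · rw [cutoff_of_one_le ha.2 hx1, indicator_of_notMem (show x ∉ Iio 1 from not_lt.2 hx1)]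
      simp
  have hint : Integrable ((Iio 1).indicator (1 : ℝ → ℝ)) (volume.restrict (Ioi 0)) := by
    rw [integrable_indicator_iff measurableSet_Iio, IntegrableOn,
      Measure.restrict_restrict measurableSet_Iio, inter_comm, Ioi_inter_Iio]
    exact integrableOn_const measure_Ioo_lt_top.ne
  have hlim : ∀ᵐ x ∂(volume.restrict (Ioi 0)),
      Tendsto (fun a => cutoff F a x ^ 2) (𝓝[>] 0) (𝓝 0) :=
    (ae_restrict_iff' measurableSet_Ioi).2 <| ae_of_all _ fun x hx => by
      simpa using (tendsto_cutoff_nhdsGT_zero hF_top hx).pow 2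
  simpa using tendsto_integral_filter_of_dominated_convergence _ hmeas hbound hint hlim

end Cutoff

theorem hasDerivAt_cutoff_integral_left {f : ℝ → ℝ} (hf : ContinuousOn f (Ioi 0)) {a x : ℝ}
    (ha : a ∈ Ioo 0 1) (hxa : x ≠ a) (hx1 : x ≠ 1) :
    HasDerivAt (cutoff (fun x => ∫ s in x..1, f s) a)
      ((Ioo a 1).indicator (fun y => -f y / ∫ s in a..1, f s) x) x :=
  hasDerivAt_cutoff ha.2 (fun _ hy =>
    hasDerivAt_integral_left_of_continuousOn_Ioi hf (ha.1.trans hy.1) one_pos) hxa hx1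

theorem integral_mul_deriv_cutoff_sq {c : ℝ → ℝ} (hc : ContinuousOn c (Ioi 0))
    (hc_pos : ∀ x > 0, 0 < c x) {a : ℝ} (ha : a ∈ Ioo 0 1) :
    ∫ x in Ioi 0, c x * deriv (cutoff (fun x => ∫ s in x..1, (c s)⁻¹) a) x ^ 2
      = (∫ s in a..1, (c s)⁻¹)⁻¹ := by
  set ν : ℝ → ℝ := fun x => ∫ s in x..1, (c s)⁻¹
  have hinv : ContinuousOn (fun s => (c s)⁻¹) (Ioi 0) := hc.inv₀ fun s hs => (hc_pos s hs).ne'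
  have hνa : 0 < ν a := by
    simpa [ν] using strictAntiOn_integral_left hinv (fun s hs => inv_pos.2 (hc_pos s hs))
      one_pos ha.1 (mem_Ioi.2 one_pos) ha.2
  have hpointwise : (fun x => c x * deriv (cutoff ν a) x ^ 2)
      =ᵐ[volume] (Ioo a 1).indicator fun x => (c x)⁻¹ / ν a ^ 2 := by
    filter_upwards [Measure.ae_ne volume a, Measure.ae_ne volume 1] with x hxa hx1
    rw [(hasDerivAt_cutoff_integral_left hinv ha hxa hx1).deriv]
    by_cases hx : x ∈ Ioo a 1
    · have hcx : c x ≠ 0 := (hc_pos x (ha.1.trans hx.1)).ne'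
      rw [indicator_of_mem hx, indicator_of_mem hx]
      have key (t : ℝ) : c x * (-(c x)⁻¹ / t) ^ 2 = (c x)⁻¹ / t ^ 2 := by field_simp
      exact key _
    · simp [indicator_of_notMem hx]
  calc ∫ x in Ioi 0, c x * deriv (cutoff ν a) x ^ 2
      = ∫ x in Ioi 0, (Ioo a 1).indicator (fun x => (c x)⁻¹ / ν a ^ 2) x :=
        integral_congr_ae (ae_restrict_of_ae hpointwise)
    _ = ∫ x in Ioo a 1, (c x)⁻¹ / ν a ^ 2 := by
        rw [setIntegral_indicator measurableSet_Ioo,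
          inter_eq_right.2 (Ioo_subset_Ioi_self.trans (Ioi_subset_Ioi ha.1.le))]
    _ = ν a / ν a ^ 2 := by
        rw [integral_div, ← integral_Ioc_eq_integral_Ioo,
          ← intervalIntegral.integral_of_le ha.2.le]
    _ = (ν a)⁻¹ := by field_simp

theorem stmt_10_general (c : ℝ → ℝ)
    (hc_cont : ContinuousOn c (Set.Ioi 0))
    (hc_pos : ∀ x > (0:ℝ), 0 < c x)
    (hν_inf : ∫⁻ s in Set.Ioc (0:ℝ) 1, ENNReal.ofReal ((c s)⁻¹) = ⊤)
    (σ : ℝ → ℝ)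
    (hσ_one : ∀ x ∈ Set.Ioo (0:ℝ) 1, σ x = 1)
    (χ : ℕ → ℝ → ℝ)
    (hχ : ∀ (n : ℕ) (x : ℝ), χ n x =
      if x ≤ ((n : ℝ))⁻¹ then 1
      else if x < 1 then (∫ s in x..1, (c s)⁻¹) / (∫ s in ((n : ℝ))⁻¹..1, (c s)⁻¹)
      else 0) :
    (∀ n : ℕ, 2 ≤ n → ∀ x > (0:ℝ), x ≠ ((n : ℝ))⁻¹ → x ≠ 1 →
      DifferentiableAt ℝ (fun y => χ n y * σ y) x) ∧
    Filter.Tendsto (fun n => ∫ x in Set.Ioi (0:ℝ), (χ n x * σ x) ^ 2)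
      Filter.atTop (nhds 0) ∧
    (∀ n : ℕ, 2 ≤ n →
      ∫ x in Set.Ioi (0:ℝ), c x * (deriv (fun y => χ n y * σ y) x) ^ 2
        = (∫ s in ((n : ℝ))⁻¹..1, (c s)⁻¹)⁻¹) ∧
    Filter.Tendsto (fun n : ℕ => (∫ s in ((n : ℝ))⁻¹..1, (c s)⁻¹)⁻¹)
      Filter.atTop (nhds 0) := by
  set ν : ℝ → ℝ := fun x => ∫ s in x..1, (c s)⁻¹
  have hinv : ContinuousOn (fun s => (c s)⁻¹) (Ioi 0) :=
    hc_cont.inv₀ fun s hs => (hc_pos s hs).ne'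
  have hν_top : Tendsto ν (𝓝[>] 0) atTop :=
    tendsto_integral_left_nhdsGT_zero hinv (fun s hs => (inv_pos.2 (hc_pos s hs)).le) hν_inf
  have hinv_mem {n : ℕ} (hn : 2 ≤ n) : (n : ℝ)⁻¹ ∈ Ioo 0 1 :=
    ⟨by positivity, inv_lt_one_of_one_lt₀ (by exact_mod_cast hn)⟩
  have hprod {n : ℕ} (hn : 2 ≤ n) :
      EqOn (fun y => χ n y * σ y) (cutoff ν (n : ℝ)⁻¹) (Ioi 0) := by
    rw [show χ n = cutoff ν (n : ℝ)⁻¹ from funext (hχ n)]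
    exact eqOn_cutoff_mul (hinv_mem hn).2 hσ_one
  have hinv_tendsto : Tendsto (fun n : ℕ => (n : ℝ)⁻¹) atTop (𝓝[>] 0) :=
    tendsto_inv_atTop_nhdsGT_zero.comp tendsto_natCast_atTop_atTop
  refine ⟨fun n hn x hx hxn hx1 => ?_, ?_, fun n hn => ?_,
    (hν_top.comp hinv_tendsto).inv_tendsto_atTop⟩
  · exact (hasDerivAt_cutoff_integral_left hinv (hinv_mem hn) hxn hx1).differentiableAt
      |>.congr_of_eventuallyEq ((hprod hn).eventuallyEq_of_mem (Ioi_mem_nhds hx))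
  · refine ((tendsto_integral_cutoff_sq
      (strictAntiOn_integral_left hinv (fun s hs => inv_pos.2 (hc_pos s hs)) one_pos).antitoneOn
      (continuousOn_integral_left_of_continuousOn_Ioi hinv one_pos) (by simp) hν_top).comp
      hinv_tendsto).congr' ?_
    filter_upwards [eventually_ge_atTop 2] with n hn
    exact setIntegral_congr_fun measurableSet_Ioi fun x hx => congrArg (· ^ 2) (hprod hn hx).symm
  · rw [← integral_mul_deriv_cutoff_sq hc_cont hc_pos (hinv_mem hn)]
    refine setIntegral_congr_fun measurableSet_Ioi fun x hx => ?_
    rw [((hprod hn).eventuallyEq_of_mem (Ioi_mem_nhds hx)).deriv_eq]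

/-- Paper: Lemma 2.9, explicit cut-off computation showing σ₊ belongs to the
domain of the closed form h̄₊ when ν₊ ∉ L^∞(0,1). -/
theorem stmt_10 (c : ℝ → ℝ)
    (hc_cont : ContinuousOn c (Set.Ioi 0))
    (hc_pos : ∀ x > (0:ℝ), 0 < c x)
    (hν_inf : ∫⁻ s in Set.Ioc (0:ℝ) 1, ENNReal.ofReal ((c s)⁻¹) = ⊤)
    (σ : ℝ → ℝ)
    (hσ_smooth : ContDiffOn ℝ (⊤ : ℕ∞) σ (Set.Ioi 0))
    (hσ_01 : ∀ x ∈ Set.Ioi (0:ℝ), σ x ∈ Set.Icc (0:ℝ) 1)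
    (hσ_one : ∀ x ∈ Set.Ioo (0:ℝ) 1, σ x = 1)
    (hσ_zero : ∀ x : ℝ, 2 ≤ x → σ x = 0)
    (χ : ℕ → ℝ → ℝ)
    (hχ : ∀ (n : ℕ) (x : ℝ), χ n x =
      if x ≤ ((n : ℝ))⁻¹ then 1
      else if x < 1 then (∫ s in x..1, (c s)⁻¹) / (∫ s in ((n : ℝ))⁻¹..1, (c s)⁻¹)
      else 0) :
    (∀ n : ℕ, 2 ≤ n → ∀ x > (0:ℝ), x ≠ ((n : ℝ))⁻¹ → x ≠ 1 →
      DifferentiableAt ℝ (fun y => χ n y * σ y) x) ∧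
    Filter.Tendsto (fun n => ∫ x in Set.Ioi (0:ℝ), (χ n x * σ x) ^ 2)
      Filter.atTop (nhds 0) ∧
    (∀ n : ℕ, 2 ≤ n →
      ∫ x in Set.Ioi (0:ℝ), c x * (deriv (fun y => χ n y * σ y) x) ^ 2
        = (∫ s in ((n : ℝ))⁻¹..1, (c s)⁻¹)⁻¹) ∧
    Filter.Tendsto (fun n : ℕ => (∫ s in ((n : ℝ))⁻¹..1, (c s)⁻¹)⁻¹)
      Filter.atTop (nhds 0) :=
  stmt_10_general c hc_cont hc_pos hν_inf σ hσ_one χ hχ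
end

section
/- Let γ > 0. Suppose η : (0,∞) → ℝ is differentiable with ∫₀^∞ η(x)² dx < ∞, and the function x ↦ c(x)η'(x) is differentiable on (0,∞) with (c(x)η'(x))' = γ·η(x) for every x > 0. Then either η(x) ≥ 0 for all x > 0 and η is non-increasing on (0,∞) (x ≤ y implies η(y) ≤ η(x)), or η(x) ≤ 0 for all x > 0 and η is non-decreasing on (0,∞). -/
/-!
With `u = c η'` the equation reads `u' = γ η`, so the product `F = η u` has derivative
`F' = γ η² + c η'² ≥ 0` and is non-decreasing. If `F (x₀) > 0` somewhere, then `F > 0` on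
`[x₀, ∞)`, hence `(η²)' = 2 F / c > 0` there and `η²` stays above `η (x₀)² > 0`, contradicting
square-integrability. So `F ≤ 0`; in particular `η η' ≤ 0`, which makes `|η|` non-increasing.
Moreover a zero of `η` forces `F = 0`, hence `F' = 0` and `η = 0`, on everything to its right;
so `η` cannot change sign.
-/

open MeasureTheory Filter Set Topology

theorem MonotoneOn.not_integrableOn_Ioi {f : ℝ → ℝ} {a : ℝ} (hf : MonotoneOn f (Ici a))
    (ha : 0 < f a) : ¬ IntegrableOn f (Ioi a) := by
  intro hint
  have hconst : IntegrableOn (fun _ ↦ f a) (Ioi a) := by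
    refine hint.mono' aestronglyMeasurable_const ?_
    filter_upwards [ae_restrict_mem measurableSet_Ioi] with t ht
    rw [Real.norm_of_nonneg ha.le]
    exact hf self_mem_Ici (mem_Ici.mpr (le_of_lt ht)) (le_of_lt ht)
  simp [Real.volume_Ioi, ha.ne'] at hconst

theorem antitoneOn_of_nonneg_of_mul_deriv_nonpos {f : ℝ → ℝ} {s : Set ℝ} (hs : IsOpen s)
    (hs' : Convex ℝ s) (hf : ∀ x ∈ s, DifferentiableAt ℝ f x) (hf₀ : ∀ x ∈ s, 0 ≤ f x)
    (hff' : ∀ x ∈ s, f x * deriv f x ≤ 0) : AntitoneOn f s := by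
  refine antitoneOn_of_deriv_nonpos hs' (fun x hx ↦ (hf x hx).continuousAt.continuousWithinAt)
    (fun x hx ↦ (hf x (interior_subset hx)).differentiableWithinAt) fun x hx ↦ ?_
  rw [hs.interior_eq] at hx
  rcases (hf₀ x hx).eq_or_lt with hzero | hpos
  · have hmin : IsLocalMin f x := by
      filter_upwards [hs.mem_nhds hx] with y hy
      exact hzero ▸ hf₀ y hy
    exact hmin.deriv_eq_zero.le
  · exact nonpos_of_mul_nonpos_right (hff' x hx) hpos

theorem monotoneOn_of_nonpos_of_mul_deriv_nonpos {f : ℝ → ℝ} {s : Set ℝ} (hs : IsOpen s)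
    (hs' : Convex ℝ s) (hf : ∀ x ∈ s, DifferentiableAt ℝ f x) (hf₀ : ∀ x ∈ s, f x ≤ 0)
    (hff' : ∀ x ∈ s, f x * deriv f x ≤ 0) : MonotoneOn f s := by
  have hanti : AntitoneOn (fun x ↦ -f x) s := by
    refine antitoneOn_of_nonneg_of_mul_deriv_nonpos hs hs' (fun x hx ↦ (hf x hx).neg)
      (fun x hx ↦ neg_nonneg.mpr (hf₀ x hx)) fun x hx ↦ ?_
    simpa only [deriv.fun_neg, neg_mul_neg] using hff' x hx
  exact fun x hx y hy hxy ↦ neg_le_neg_iff.mp (hanti hx hy hxy)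

structure IsDeficiencySolution (c : ℝ → ℝ) (γ : ℝ) (η : ℝ → ℝ) : Prop where
  coeff_pos : ∀ x > (0:ℝ), 0 < c x
  rate_pos : 0 < γ
  differentiableAt : ∀ x > (0:ℝ), DifferentiableAt ℝ η x
  hasDerivAt_flux : ∀ x > (0:ℝ), HasDerivAt (fun y ↦ c y * deriv η y) (γ * η x) x

namespace IsDeficiencySolution

variable {c : ℝ → ℝ} {γ : ℝ} {η : ℝ → ℝ}

theorem continuousOn (h : IsDeficiencySolution c γ η) : ContinuousOn η (Ioi 0) :=
  fun x hx ↦ (h.differentiableAt x hx).continuousAt.continuousWithinAt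

theorem hasDerivAt_mul_flux (h : IsDeficiencySolution c γ η) {x : ℝ} (hx : 0 < x) :
    HasDerivAt (fun y ↦ η y * (c y * deriv η y)) (γ * η x ^ 2 + c x * deriv η x ^ 2) x :=
  ((h.differentiableAt x hx).hasDerivAt.fun_mul (h.hasDerivAt_flux x hx)).congr_deriv (by ring)

theorem monotoneOn_mul_flux (h : IsDeficiencySolution c γ η) :
    MonotoneOn (fun y ↦ η y * (c y * deriv η y)) (Ioi 0) := by
  refine monotoneOn_of_hasDerivWithinAt_nonneg (convex_Ioi 0)
    (fun x hx ↦ (h.hasDerivAt_mul_flux hx).continuousAt.continuousWithinAt)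
    (fun x hx ↦ (h.hasDerivAt_mul_flux (interior_subset hx)).hasDerivWithinAt) fun x hx ↦ ?_
  have hc := h.coeff_pos x (interior_subset hx)
  have hγ := h.rate_pos
  positivity

theorem mul_flux_nonpos (h : IsDeficiencySolution c γ η)
    (hL2 : IntegrableOn (fun x ↦ η x ^ 2) (Ioi 0)) {x₀ : ℝ} (hx₀ : 0 < x₀) :
    η x₀ * (c x₀ * deriv η x₀) ≤ 0 := by
  by_contra! hF₀
  have hIci : Ici x₀ ⊆ Ioi 0 := Ici_subset_Ioi.mpr hx₀
  have hF : ∀ t ∈ Ici x₀, 0 < η t * deriv η t := fun t ht ↦ by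
    have hFt : 0 < c t * (η t * deriv η t) := by
      have := h.monotoneOn_mul_flux (hIci self_mem_Ici) (hIci ht) ht
      linarith
    exact pos_of_mul_pos_right hFt (h.coeff_pos t (hIci ht)).le
  have hsq : MonotoneOn (fun x ↦ η x ^ 2) (Ici x₀) := by
    refine monotoneOn_of_hasDerivWithinAt_nonneg (convex_Ici x₀)
      (fun x hx ↦ ((h.differentiableAt x (hIci hx)).continuousAt.pow 2).continuousWithinAt)
      (fun x hx ↦ ((h.differentiableAt x (hIci (interior_subset hx))).hasDerivAt.pow
        2).hasDerivWithinAt) fun x hx ↦ ?_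
    simpa [mul_assoc] using (hF x (interior_subset hx)).le
  have hη₀ : 0 < η x₀ ^ 2 := by
    have : η x₀ ≠ 0 := by
      rintro h0
      simp [h0] at hF₀
    positivity
  exact hsq.not_integrableOn_Ioi hη₀ (hL2.mono_set (Ioi_subset_Ioi hx₀.le))

theorem eq_zero_of_lt (h : IsDeficiencySolution c γ η)
    (hL2 : IntegrableOn (fun x ↦ η x ^ 2) (Ioi 0)) {z t : ℝ} (hz : 0 < z) (hηz : η z = 0)
    (hzt : z < t) : η t = 0 := by
  have hF : ∀ s ∈ Ioi z, η s * (c s * deriv η s) = 0 := fun s hs ↦ by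
    have hle := h.monotoneOn_mul_flux hz (hz.trans hs) (le_of_lt hs)
    simp only [hηz, zero_mul] at hle
    exact le_antisymm (h.mul_flux_nonpos hL2 (hz.trans hs)) hle
  have hF' : HasDerivAt (fun y ↦ η y * (c y * deriv η y)) 0 t :=
    (hasDerivAt_const t 0).congr_of_eventuallyEq
      (eventually_of_mem (Ioi_mem_nhds hzt) hF)
  have hsum := (h.hasDerivAt_mul_flux (hz.trans hzt)).unique hF'
  have hc := h.coeff_pos t (hz.trans hzt)
  have hγ := h.rate_pos
  have : γ * η t ^ 2 = 0 := by
    nlinarith [mul_nonneg hc.le (sq_nonneg (deriv η t)), mul_nonneg hγ.le (sq_nonneg (η t))]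
  simpa [hγ.ne'] using this

theorem nonneg_or_nonpos (h : IsDeficiencySolution c γ η)
    (hL2 : IntegrableOn (fun x ↦ η x ^ 2) (Ioi 0)) :
    (∀ x > (0:ℝ), 0 ≤ η x) ∨ ∀ x > (0:ℝ), η x ≤ 0 := by
  by_contra! ⟨⟨a, ha, hηa⟩, ⟨b, hb, hηb⟩⟩
  rcases lt_or_gt_of_ne (show a ≠ b by rintro rfl; linarith) with hab | hba
  · obtain ⟨z, hz, hηz⟩ := intermediate_value_Ioo hab.le
      (h.continuousOn.mono fun t ht ↦ ha.trans_le ht.1) (mem_Ioo.mpr ⟨hηa, hηb⟩)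
    exact hηb.ne' (h.eq_zero_of_lt hL2 (ha.trans hz.1) hηz hz.2)
  · obtain ⟨z, hz, hηz⟩ := intermediate_value_Ioo' hba.le
      (h.continuousOn.mono fun t ht ↦ hb.trans_le ht.1) (mem_Ioo.mpr ⟨hηa, hηb⟩)
    exact hηa.ne (h.eq_zero_of_lt hL2 (hb.trans hz.1) hηz hz.2)

theorem mul_deriv_nonpos (h : IsDeficiencySolution c γ η)
    (hL2 : IntegrableOn (fun x ↦ η x ^ 2) (Ioi 0)) {x : ℝ} (hx : 0 < x) :
    η x * deriv η x ≤ 0 := by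
  have hF := h.mul_flux_nonpos hL2 hx
  rw [mul_left_comm] at hF
  exact nonpos_of_mul_nonpos_right hF (h.coeff_pos x hx)

end IsDeficiencySolution

theorem stmt_11_general (c : ℝ → ℝ)
    (hc_pos : ∀ x > (0:ℝ), 0 < c x)
    (γ : ℝ) (hγ : 0 < γ)
    (η : ℝ → ℝ)
    (hη_diff : ∀ x > (0:ℝ), DifferentiableAt ℝ η x)
    (hη_L2 : MeasureTheory.IntegrableOn (fun x => (η x) ^ 2) (Set.Ioi 0))
    (hode : ∀ x > (0:ℝ), HasDerivAt (fun y => c y * deriv η y) (γ * η x) x) :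
    ((∀ x > (0:ℝ), 0 ≤ η x) ∧
      ∀ x y : ℝ, 0 < x → x ≤ y → η y ≤ η x) ∨
    ((∀ x > (0:ℝ), η x ≤ 0) ∧
      ∀ x y : ℝ, 0 < x → x ≤ y → η x ≤ η y) := by
  have h : IsDeficiencySolution c γ η := ⟨hc_pos, hγ, hη_diff, hode⟩
  have hηη' : ∀ x ∈ Ioi (0:ℝ), η x * deriv η x ≤ 0 := fun x hx ↦ h.mul_deriv_nonpos hη_L2 hx
  rcases h.nonneg_or_nonpos hη_L2 with hnn | hnp
  · have hanti :=
      antitoneOn_of_nonneg_of_mul_deriv_nonpos isOpen_Ioi (convex_Ioi 0) hη_diff hnn hηη'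
    exact .inl ⟨hnn, fun x y hx hxy ↦ hanti hx (hx.trans_le hxy) hxy⟩
  · have hmono :=
      monotoneOn_of_nonpos_of_mul_deriv_nonpos isOpen_Ioi (convex_Ioi 0) hη_diff hnp hηη'
    exact .inr ⟨hnp, fun x y hx hxy ↦ hmono hx (hx.trans_le hxy) hxy⟩

/-- Paper: structural claim preceding Proposition 2.10. Every L²-solution of
(cη')' = γη on (0,∞) is, up to sign, non-negative and non-increasing. -/
theorem stmt_11 (c : ℝ → ℝ)
    (hc_cont : ContinuousOn c (Set.Ioi 0))
    (hc_pos : ∀ x > (0:ℝ), 0 < c x)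
    (γ : ℝ) (hγ : 0 < γ)
    (η : ℝ → ℝ)
    (hη_diff : ∀ x > (0:ℝ), DifferentiableAt ℝ η x)
    (hη_L2 : MeasureTheory.IntegrableOn (fun x => (η x) ^ 2) (Set.Ioi 0))
    (hode : ∀ x > (0:ℝ), HasDerivAt (fun y => c y * deriv η y) (γ * η x) x) :
    ((∀ x > (0:ℝ), 0 ≤ η x) ∧
      ∀ x y : ℝ, 0 < x → x ≤ y → η y ≤ η x) ∨
    ((∀ x > (0:ℝ), η x ≤ 0) ∧
      ∀ x y : ℝ, 0 < x → x ≤ y → η x ≤ η y) :=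
  stmt_11_general c hc_pos γ hγ η hη_diff hη_L2 hode
end

section
/- Assume ∫₁^∞ s·c(s)⁻¹ ds = ∞. Let ψ : (0,∞) → ℝ be differentiable, with x ↦ c(x)ψ'(x) differentiable on (0,∞) and (c(x)ψ'(x))' = ψ(x) for every x > 0. Assume the limit L := lim_{x→0⁺} c(x)·ψ(x)·ψ'(x) exists and L ≥ 0 (this holds in particular under the boundary condition lim_{x→0⁺} c(x)ψ'(x) = γ·lim_{x→0⁺} ψ(x) with γ ≥ 0, both limits existing). If ψ is not identically zero on (0,∞), then ψ(x)² → ∞ as x → ∞; consequently ψ is unbounded and ∫₀^∞ |ψ(x)|ᵖ dx = ∞ for every p ∈ [1,∞). -/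
/-!
The quantity `E = c ψ ψ'` satisfies `E' = c ψ'² + ψ² ≥ 0`, so it increases from its boundary
value `L ≥ 0`; for a non-zero solution it becomes positive at some `a`. From then on
`(ψ²)' = 2E/c > 0`, so `ψ² ≥ δ := ψ(a)² > 0`, hence `E' ≥ δ` and `E` grows linearly.
Feeding this back, `(ψ²)' ≥ δ x / c(x)` for large `x`, and `∫^∞ x / c(x) dx = ∞` forces
`ψ² → ∞`.
-/

open MeasureTheory Filter Set Topology

theorem monotoneOn_of_hasDerivAt_nonneg {D : Set ℝ} (hD : Convex ℝ D) {f f' : ℝ → ℝ}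
    (hf : ∀ x ∈ D, HasDerivAt f (f' x) x) (hf' : ∀ x ∈ interior D, 0 ≤ f' x) :
    MonotoneOn f D :=
  monotoneOn_of_hasDerivWithinAt_nonneg hD
    (fun x hx => (hf x hx).continuousAt.continuousWithinAt)
    (fun x hx => (hf x (interior_subset hx)).hasDerivWithinAt) hf'

theorem tendsto_intervalIntegral_atTop_of_setLIntegral_eq_top {k : ℝ → ℝ} {a : ℝ}
    (hk_int : ∀ x > a, IntervalIntegrable k volume a x) (hk_nonneg : ∀ t > a, 0 ≤ k t)
    (htop : ∫⁻ t in Ioi a, ENNReal.ofReal (k t) = ⊤) :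
    Tendsto (fun x => ∫ t in a..x, k t) atTop atTop := by
  set μ := volume.withDensity fun t => ENNReal.ofReal (k t)
  have hμ : Tendsto (fun x => μ (Ioc a x)) atTop (𝓝 ⊤) := by
    have := tendsto_measure_iUnion_atTop (μ := μ)
      (fun x y hxy => Ioc_subset_Ioc_right hxy : Monotone (Ioc a))
    rwa [iUnion_Ioc_right, withDensity_apply _ measurableSet_Ioi, htop] at this
  rw [← ENNReal.tendsto_ofReal_nhds_top]
  refine hμ.congr' ?_
  filter_upwards [eventually_gt_atTop a] with x hx
  rw [withDensity_apply _ measurableSet_Ioc, intervalIntegral.integral_of_le hx.le,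
    ofReal_integral_eq_lintegral_ofReal (hk_int x hx).1
      (ae_restrict_of_forall_mem measurableSet_Ioc fun t ht => hk_nonneg t ht.1)]

theorem setLIntegral_Ioi_ofReal_eq_top_of_tendsto_atTop (a : ℝ) {f : ℝ → ℝ}
    (hf : Tendsto f atTop atTop) : ∫⁻ x in Ioi a, ENNReal.ofReal (f x) = ⊤ := by
  obtain ⟨R, hR⟩ := eventually_atTop.1 (hf.eventually_ge_atTop 1)
  refine top_le_iff.1 ?_
  calc ⊤ = ∫⁻ _ in Ioi (max a R), 1 := by simp
    _ ≤ ∫⁻ x in Ioi (max a R), ENNReal.ofReal (f x) :=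
        setLIntegral_mono' measurableSet_Ioi fun x hx =>
          ENNReal.one_le_ofReal.2 (hR x ((le_max_right a R).trans hx.le))
    _ ≤ ∫⁻ x in Ioi a, ENNReal.ofReal (f x) :=
        lintegral_mono_set (Ioi_subset_Ioi (le_max_left a R))

structure SolvesDivFormEq (c ψ : ℝ → ℝ) : Prop where
  differentiableAt : ∀ x > 0, DifferentiableAt ℝ ψ x
  hasDerivAt_flux : ∀ x > 0, HasDerivAt (fun y => c y * deriv ψ y) (ψ x) x

noncomputable def energy (c ψ : ℝ → ℝ) (x : ℝ) : ℝ := c x * ψ x * deriv ψ x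

namespace SolvesDivFormEq

variable {c ψ : ℝ → ℝ} {a x : ℝ}

theorem hasDerivAt_energy (h : SolvesDivFormEq c ψ) (hx : 0 < x) :
    HasDerivAt (energy c ψ) (c x * deriv ψ x ^ 2 + ψ x ^ 2) x := by
  have hE : energy c ψ = fun y => ψ y * (c y * deriv ψ y) := by
    funext y
    simp only [energy]
    ring
  rw [hE]
  exact ((h.differentiableAt x hx).hasDerivAt.fun_mul (h.hasDerivAt_flux x hx)).congr_deriv
    (by ring)

theorem hasDerivAt_sq (h : SolvesDivFormEq c ψ) (hx : 0 < x) (hc : c x ≠ 0) :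
    HasDerivAt (fun y => ψ y ^ 2) (2 * energy c ψ x / c x) x := by
  refine ((h.differentiableAt x hx).hasDerivAt.fun_pow 2).congr_deriv ?_
  simp only [energy]
  field_simp
  ring

theorem monotoneOn_energy (h : SolvesDivFormEq c ψ) (hc_pos : ∀ x > 0, 0 < c x) :
    MonotoneOn (energy c ψ) (Ioi 0) := by
  refine monotoneOn_of_hasDerivAt_nonneg (convex_Ioi 0) (fun x hx => h.hasDerivAt_energy hx)
    fun x hx => ?_
  rw [interior_Ioi] at hx
  have := hc_pos x hx
  positivity

theorem exists_energy_pos (h : SolvesDivFormEq c ψ) (hc_pos : ∀ x > 0, 0 < c x) {L : ℝ}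
    (hL_nonneg : 0 ≤ L) (hL : Tendsto (energy c ψ) (𝓝[>] 0) (𝓝 L)) (hx : 0 < x)
    (hψx : ψ x ≠ 0) : ∃ a > 0, 0 < energy c ψ a := by
  by_contra! hneg
  have hL_le : ∀ y > 0, L ≤ energy c ψ y := fun y hy =>
    le_of_tendsto hL <| by
      filter_upwards [Ioo_mem_nhdsGT hy] with z hz
      exact h.monotoneOn_energy hc_pos hz.1 hy hz.2.le
  -- `E ≡ 0` near `x` would force `E'(x) = 0`.
  have hzero : energy c ψ =ᶠ[𝓝 x] fun _ => 0 := by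
    filter_upwards [Ioi_mem_nhds hx] with y hy
    exact le_antisymm (hneg y hy) (hL_nonneg.trans (hL_le y hy))
  have hderiv :=
    (h.hasDerivAt_energy hx).unique ((hasDerivAt_const x 0).congr_of_eventuallyEq hzero)
  have := hc_pos x hx
  have : 0 < c x * deriv ψ x ^ 2 + ψ x ^ 2 := by positivity
  linarith

theorem monotoneOn_sq (h : SolvesDivFormEq c ψ) (hc_pos : ∀ x > 0, 0 < c x) (ha : 0 < a)
    (hEa : 0 < energy c ψ a) : MonotoneOn (fun x => ψ x ^ 2) (Ici a) := by
  refine monotoneOn_of_hasDerivAt_nonneg (convex_Ici a)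
    (fun x hx => h.hasDerivAt_sq (ha.trans_le hx) (hc_pos x (ha.trans_le hx)).ne')
    fun x hx => ?_
  rw [interior_Ici] at hx
  have hx0 : 0 < x := ha.trans hx
  have hEx : 0 < energy c ψ x := hEa.trans_le (h.monotoneOn_energy hc_pos ha hx0 hx.le)
  have := hc_pos x hx0
  positivity

theorem monotoneOn_energy_sub_linear (h : SolvesDivFormEq c ψ) (hc_pos : ∀ x > 0, 0 < c x)
    (ha : 0 < a) (hEa : 0 < energy c ψ a) :
    MonotoneOn (fun x => energy c ψ x - ψ a ^ 2 * x) (Ici a) := by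
  refine monotoneOn_of_hasDerivAt_nonneg (convex_Ici a)
    (fun x hx => (h.hasDerivAt_energy (ha.trans_le hx)).sub ((hasDerivAt_id x).const_mul _))
    fun x hx => ?_
  rw [interior_Ici, mem_Ioi] at hx
  have hψ : ψ a ^ 2 ≤ ψ x ^ 2 :=
    h.monotoneOn_sq hc_pos ha hEa self_mem_Ici (mem_Ici.2 hx.le) hx.le
  have := hc_pos x (ha.trans hx)
  have : 0 ≤ c x * deriv ψ x ^ 2 := by positivity
  linarith

theorem monotoneOn_sq_sub_integral (h : SolvesDivFormEq c ψ) (hc_pos : ∀ x > 0, 0 < c x)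
    (hk : ContinuousOn (fun t => t * (c t)⁻¹) (Ioi 0)) (ha : 0 < a) (hEa : 0 < energy c ψ a) :
    MonotoneOn (fun x => ψ x ^ 2 - ψ a ^ 2 * ∫ t in (1 : ℝ)..x, t * (c t)⁻¹)
      (Ici (2 * a)) := by
  refine monotoneOn_of_hasDerivAt_nonneg (convex_Ici _)
    (f' := fun x => 2 * energy c ψ x / c x - ψ a ^ 2 * (x * (c x)⁻¹)) (fun x hx => ?_)
    fun x hx => ?_
  · have hx0 : 0 < x := by linarith [mem_Ici.1 hx]
    refine (h.hasDerivAt_sq hx0 (hc_pos x hx0).ne').sub (HasDerivAt.const_mul _ ?_)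
    exact intervalIntegral.integral_hasDerivAt_right
      (hk.mono (ordConnected_Ioi.uIcc_subset one_pos hx0)).intervalIntegrable
      (hk.stronglyMeasurableAtFilter isOpen_Ioi x hx0) (hk.continuousAt (Ioi_mem_nhds hx0))
  · rw [interior_Ici, mem_Ioi] at hx
    have hx0 : 0 < x := by linarith
    have hlin : energy c ψ a - ψ a ^ 2 * a ≤ energy c ψ x - ψ a ^ 2 * x :=
      h.monotoneOn_energy_sub_linear hc_pos ha hEa self_mem_Ici (mem_Ici.2 (by linarith))
        (by linarith)
    have hδx : 0 ≤ 2 * energy c ψ x - ψ a ^ 2 * x := by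
      linarith [mul_nonneg (sq_nonneg (ψ a)) (sub_nonneg.2 hx.le)]
    have hc := hc_pos x hx0
    calc (0 : ℝ) ≤ (2 * energy c ψ x - ψ a ^ 2 * x) / c x := by positivity
      _ = _ := by field_simp

theorem tendsto_sq_atTop (h : SolvesDivFormEq c ψ) (hc_cont : ContinuousOn c (Ioi 0))
    (hc_pos : ∀ x > 0, 0 < c x)
    (hgrowth : ∫⁻ s in Ioi (1 : ℝ), ENNReal.ofReal (s * (c s)⁻¹) = ⊤) {L : ℝ}
    (hL_nonneg : 0 ≤ L) (hL : Tendsto (energy c ψ) (𝓝[>] 0) (𝓝 L)) (hx : 0 < x)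
    (hψx : ψ x ≠ 0) : Tendsto (fun x => ψ x ^ 2) atTop atTop := by
  obtain ⟨a, ha, hEa⟩ := h.exists_energy_pos hc_pos hL_nonneg hL hx hψx
  have hδ : 0 < ψ a ^ 2 := pow_two_pos_of_ne_zero fun h0 => hEa.ne' (by simp [energy, h0])
  have hk : ContinuousOn (fun t => t * (c t)⁻¹) (Ioi 0) :=
    continuousOn_id.mul (hc_cont.inv₀ fun t ht => (hc_pos t ht).ne')
  have hI : Tendsto (fun x => ∫ t in (1 : ℝ)..x, t * (c t)⁻¹) atTop atTop :=
    tendsto_intervalIntegral_atTop_of_setLIntegral_eq_top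
      (fun x hx =>
        (hk.mono (ordConnected_Ioi.uIcc_subset one_pos (one_pos.trans hx))).intervalIntegrable)
      (fun t ht => by have := hc_pos t (one_pos.trans ht); positivity) hgrowth
  set C := ψ (2 * a) ^ 2 - ψ a ^ 2 * ∫ t in (1 : ℝ)..(2 * a), t * (c t)⁻¹
  refine tendsto_atTop_mono' atTop ?_
    (tendsto_atTop_add_const_left _ C (hI.const_mul_atTop hδ))
  filter_upwards [eventually_ge_atTop (2 * a)] with x hx
  have hmono : C ≤ ψ x ^ 2 - ψ a ^ 2 * ∫ t in (1 : ℝ)..x, t * (c t)⁻¹ :=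
    h.monotoneOn_sq_sub_integral hc_pos hk ha hEa self_mem_Ici hx hx
  linarith

end SolvesDivFormEq

/-- Paper: Lemma 5.2. Under ∫₁^∞ s/c(s) ds = ∞, the equation (cψ')' = ψ with
non-negative boundary value L = lim (c·ψ·ψ')(0⁺) ≥ 0 has no non-zero bounded or
L^p solution: a non-zero solution satisfies ψ(x)² → ∞. -/
theorem stmt_13 (c : ℝ → ℝ)
    (hc_cont : ContinuousOn c (Set.Ioi 0))
    (hc_pos : ∀ x > (0:ℝ), 0 < c x)
    (hgrowth : ∫⁻ s in Set.Ioi (1:ℝ), ENNReal.ofReal (s * (c s)⁻¹) = ⊤)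
    (ψ : ℝ → ℝ)
    (hψ_diff : ∀ x > (0:ℝ), DifferentiableAt ℝ ψ x)
    (hode : ∀ x > (0:ℝ), HasDerivAt (fun y => c y * deriv ψ y) (ψ x) x)
    (L : ℝ) (hL_nonneg : 0 ≤ L)
    (hL : Filter.Tendsto (fun x => c x * ψ x * deriv ψ x)
      (nhdsWithin 0 (Set.Ioi 0)) (nhds L))
    (hψ_ne : ∃ x > (0:ℝ), ψ x ≠ 0) :
    Filter.Tendsto (fun x => (ψ x) ^ 2) Filter.atTop Filter.atTop ∧
    (¬ ∃ M : ℝ, ∀ x > (0:ℝ), |ψ x| ≤ M) ∧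
    (∀ p : ℝ, 1 ≤ p →
      ∫⁻ x in Set.Ioi (0:ℝ), ENNReal.ofReal (|ψ x| ^ p) = ⊤) := by
  obtain ⟨x₀, hx₀, hψx₀⟩ := hψ_ne
  have hsq : Tendsto (fun x => ψ x ^ 2) atTop atTop :=
    SolvesDivFormEq.tendsto_sq_atTop ⟨hψ_diff, hode⟩ hc_cont hc_pos hgrowth hL_nonneg hL hx₀
      hψx₀
  have habs : Tendsto (fun x => |ψ x|) atTop atTop := by
    simpa only [Function.comp_def, Real.sqrt_sq_eq_abs] using Real.tendsto_sqrt_atTop.comp hsq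
  refine ⟨hsq, ?_, fun p hp => ?_⟩
  · rintro ⟨M, hM⟩
    obtain ⟨x, hMx, hx⟩ := ((habs.eventually_gt_atTop M).and (eventually_gt_atTop 0)).exists
    exact (hM x hx).not_gt hMx
  · exact setLIntegral_Ioi_ofReal_eq_top_of_tendsto_atTop 0
      ((tendsto_rpow_atTop (by linarith)).comp habs)
end

section
/- Suppose c : ℝ → ℝ is continuous with c(x) > 0 for every x > 0, c is differentiable on (0,1) with sup_{x∈(0,1)} |c'(x)| < ∞, and ∫₀¹ c(s)⁻¹ ds = ∞. Then there exists N and a sequence of continuously differentiable functions φₙ : [0,∞) → ℝ (n ≥ N) such that: 0 ≤ φₙ ≤ 1; φₙ(x) = 0 for x ∈ [0,1/n]; φₙ(x) = 1 for x ≥ 1; φₙ(x) → 1 as n → ∞ for every x > 0; the function x ↦ c(x)φₙ'(x) is differentiable on (0,∞) except at finitely many points; and ∫₀^∞ |deriv(c·φₙ')(x)| dx → 0 as n → ∞. -/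
/-!
Take `φₙ x = (∫₀ˣ uₙ / c) / Jₙ` with `Jₙ = ∫₀¹ uₙ / c`, where `uₙ` is the trapezoid rising linearly
from `0` at `1/n` to `1` at `2/n`, equal to `1` on `[2/n, 1/2]` and falling linearly to `0` at `1`.
Then `c φₙ' = uₙ / Jₙ` is piecewise linear, so `∫ |(c φₙ')'| ≤ (∫ |uₙ'|) / Jₙ = 2 / Jₙ`, and
`1 - φₙ x ≤ (∫ₓ¹ 1 / c) / Jₙ` for `0 < x < 1`. Both tend to `0` because
`Jₙ ≥ ∫_{2/n}^{1/2} 1 / c → ∞`: the integral of `1 / c` diverges at `0`, as `1 / c` is bounded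
on `[1/2, 1]`.
-/

open MeasureTheory Filter Set Topology

noncomputable def unitClamp (t : ℝ) : ℝ := max 0 (min 1 t)

lemma unitClamp_nonneg (t : ℝ) : 0 ≤ unitClamp t := le_max_left _ _

lemma unitClamp_le_one (t : ℝ) : unitClamp t ≤ 1 := max_le zero_le_one (min_le_left _ _)

lemma unitClamp_of_nonpos {t : ℝ} (ht : t ≤ 0) : unitClamp t = 0 :=
  max_eq_left ((min_le_right _ _).trans ht)

lemma unitClamp_of_one_le {t : ℝ} (ht : 1 ≤ t) : unitClamp t = 1 := by
  rw [unitClamp, min_eq_left ht, max_eq_right zero_le_one]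

lemma unitClamp_of_mem_Icc {t : ℝ} (ht : t ∈ Icc 0 1) : unitClamp t = t := by
  rw [unitClamp, min_eq_right ht.2, max_eq_right ht.1]

lemma monotone_unitClamp : Monotone unitClamp :=
  fun _ _ h => max_le_max le_rfl (min_le_min le_rfl h)

@[fun_prop]
lemma continuous_unitClamp : Continuous unitClamp := by
  unfold unitClamp; fun_prop

lemma hasDerivAt_unitClamp {t : ℝ} (h0 : t ≠ 0) (h1 : t ≠ 1) :
    HasDerivAt unitClamp ((Ioo 0 1).indicator 1 t) t := by
  rcases lt_or_gt_of_ne h0 with ht0 | ht0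
  · rw [indicator_of_notMem fun h => lt_asymm h.1 ht0]
    refine (hasDerivAt_const t 0).congr_of_eventuallyEq ?_
    filter_upwards [Iio_mem_nhds ht0] with s hs using unitClamp_of_nonpos hs.le
  rcases lt_or_gt_of_ne h1 with ht1 | ht1
  · rw [indicator_of_mem (show t ∈ Ioo 0 1 from ⟨ht0, ht1⟩)]
    refine (hasDerivAt_id t).congr_of_eventuallyEq ?_
    filter_upwards [Ioo_mem_nhds ht0 ht1] with s hs
      using unitClamp_of_mem_Icc (Ioo_subset_Icc_self hs)
  · rw [indicator_of_notMem fun h => lt_asymm h.2 ht1]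
    refine (hasDerivAt_const t 1).congr_of_eventuallyEq ?_
    filter_upwards [Ioi_mem_nhds ht1] with s hs using unitClamp_of_one_le hs.le

lemma abs_deriv_unitClamp_ae_eq :
    (fun t => |deriv unitClamp t|) =ᵐ[volume] (Ioo 0 1).indicator 1 := by
  filter_upwards [({0, 1} : Finset ℝ).countable_toSet.ae_notMem volume] with t ht
  simp only [Finset.coe_insert, Finset.coe_singleton, mem_insert_iff, mem_singleton_iff,
    not_or] at ht
  rw [(hasDerivAt_unitClamp ht.1 ht.2).deriv,
    abs_of_nonneg (indicator_nonneg (f := 1) (fun _ _ => zero_le_one) t)]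

lemma integrable_abs_deriv_unitClamp : Integrable fun t => |deriv unitClamp t| :=
  ((integrable_indicator_iff measurableSet_Ioo).2
    (integrableOn_const measure_Ioo_lt_top.ne)).congr abs_deriv_unitClamp_ae_eq.symm

lemma integral_abs_deriv_unitClamp : ∫ t, |deriv unitClamp t| = 1 := by
  rw [integral_congr_ae abs_deriv_unitClamp_ae_eq, integral_indicator_one measurableSet_Ioo]
  simp

noncomputable def ramp (a s : ℝ) : ℝ := unitClamp (a * s - 1)

lemma deriv_ramp (a s : ℝ) : deriv (ramp a) s = a * deriv unitClamp (a * s - 1) := by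
  change deriv (fun s => unitClamp (a * s - 1)) s = _
  rw [deriv_comp_mul_left (f := fun y => unitClamp (y - 1)), deriv_comp_sub_const,
    smul_eq_mul]

lemma integrable_abs_deriv_ramp {a : ℝ} (ha : a ≠ 0) :
    Integrable fun s => |deriv (ramp a) s| := by
  simp_rw [deriv_ramp, abs_mul]
  exact ((integrable_abs_deriv_unitClamp.comp_sub_right 1).comp_mul_left' ha).const_mul _

lemma integral_abs_deriv_ramp {a : ℝ} (ha : a ≠ 0) : ∫ s, |deriv (ramp a) s| = 1 := by
  simp_rw [deriv_ramp, abs_mul]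
  rw [integral_const_mul, Measure.integral_comp_mul_left (fun y => |deriv unitClamp (y - 1)|),
    integral_sub_right_eq_self (fun y => |deriv unitClamp y|), integral_abs_deriv_unitClamp,
    smul_eq_mul, mul_one, abs_inv, mul_inv_cancel₀ (abs_ne_zero.2 ha)]

lemma differentiableAt_ramp {a s : ℝ} (ha : a ≠ 0) (h1 : s ≠ a⁻¹) (h2 : s ≠ 2 / a) :
    DifferentiableAt ℝ (ramp a) s := by
  refine (hasDerivAt_unitClamp (fun h => h1 ?_) (fun h => h2 ?_)).differentiableAt.comp
    (f := fun s => a * s - 1) s (by fun_prop)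
  · exact eq_inv_of_mul_eq_one_right (by linarith)
  · rw [eq_div_iff ha]; linarith

-- The trapezoid `uₐ` as a difference of two clamped ramps, each of total variation `1`.
noncomputable def bumpProfile (a s : ℝ) : ℝ := ramp a s - ramp 2 s

lemma bumpProfile_le_one (a s : ℝ) : bumpProfile a s ≤ 1 := by
  unfold bumpProfile ramp
  linarith [unitClamp_le_one (a * s - 1), unitClamp_nonneg (2 * s - 1)]

lemma bumpProfile_nonneg {a : ℝ} (ha : 2 ≤ a) (s : ℝ) : 0 ≤ bumpProfile a s := by
  rw [bumpProfile, ramp, ramp, sub_nonneg]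
  rcases le_total s 0 with hs | hs
  · rw [unitClamp_of_nonpos (by linarith)]; exact unitClamp_nonneg _
  · exact monotone_unitClamp (by nlinarith)

lemma bumpProfile_of_le_inv {a s : ℝ} (ha : 2 ≤ a) (hs : s ≤ a⁻¹) : bumpProfile a s = 0 := by
  have has : a * s ≤ 1 := by rwa [← le_div_iff₀' (by linarith), one_div]
  have hs2 : s ≤ 1 / 2 := hs.trans (by rw [one_div]; exact inv_anti₀ two_pos ha)
  rw [bumpProfile, ramp, ramp, unitClamp_of_nonpos (by linarith),
    unitClamp_of_nonpos (by linarith), sub_zero]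

lemma bumpProfile_of_one_le {a s : ℝ} (ha : 2 ≤ a) (hs : 1 ≤ s) : bumpProfile a s = 0 := by
  rw [bumpProfile, ramp, ramp, unitClamp_of_one_le (by nlinarith),
    unitClamp_of_one_le (by linarith), sub_self]

lemma bumpProfile_of_mem_Icc {a s : ℝ} (ha : 0 < a) (hs : s ∈ Icc (2 / a) (1 / 2)) :
    bumpProfile a s = 1 := by
  have has : 2 ≤ a * s := by rw [← div_le_iff₀' ha]; exact hs.1
  rw [bumpProfile, ramp, ramp, unitClamp_of_one_le (by linarith),
    unitClamp_of_nonpos (by linarith [hs.2]), sub_zero]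

lemma continuous_bumpProfile (a : ℝ) : Continuous (bumpProfile a) := by
  unfold bumpProfile ramp; fun_prop

lemma differentiableAt_ramps {a s : ℝ} (ha : a ≠ 0)
    (hs : s ∉ ({a⁻¹, 2 / a, 1 / 2, 1} : Finset ℝ)) :
    DifferentiableAt ℝ (ramp a) s ∧ DifferentiableAt ℝ (ramp 2) s := by
  simp only [Finset.mem_insert, Finset.mem_singleton, not_or] at hs
  obtain ⟨h1, h2, h3, h4⟩ := hs
  exact ⟨differentiableAt_ramp ha h1 h2,
    differentiableAt_ramp two_ne_zero (by norm_num [h3]) (by norm_num [h4])⟩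

lemma differentiableAt_bumpProfile {a s : ℝ} (ha : a ≠ 0)
    (hs : s ∉ ({a⁻¹, 2 / a, 1 / 2, 1} : Finset ℝ)) :
    DifferentiableAt ℝ (bumpProfile a) s := by
  obtain ⟨h₁, h₂⟩ := differentiableAt_ramps ha hs
  exact h₁.sub h₂

lemma abs_deriv_bumpProfile_ae_le {a : ℝ} (ha : a ≠ 0) :
    ∀ᵐ s, |deriv (bumpProfile a) s| ≤ |deriv (ramp a) s| + |deriv (ramp 2) s| := by
  filter_upwards [({a⁻¹, 2 / a, 1 / 2, 1} : Finset ℝ).countable_toSet.ae_notMem volume] with s hs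
  obtain ⟨h₁, h₂⟩ := differentiableAt_ramps ha hs
  change |deriv (ramp a - ramp 2) s| ≤ _
  rw [deriv_sub h₁ h₂]
  exact abs_sub _ _

lemma integrable_abs_deriv_bumpProfile {a : ℝ} (ha : a ≠ 0) :
    Integrable fun s => |deriv (bumpProfile a) s| :=
  ((integrable_abs_deriv_ramp ha).add (integrable_abs_deriv_ramp two_ne_zero)).mono'
    (measurable_deriv _).abs.aestronglyMeasurable
    (by simpa only [Real.norm_eq_abs, abs_abs, Pi.add_apply]
      using abs_deriv_bumpProfile_ae_le ha)

lemma integral_abs_deriv_bumpProfile_le {a : ℝ} (ha : a ≠ 0) :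
    ∫ s, |deriv (bumpProfile a) s| ≤ 2 := by
  calc ∫ s, |deriv (bumpProfile a) s|
      ≤ ∫ s, (|deriv (ramp a) s| + |deriv (ramp 2) s|) :=
        integral_mono_of_nonneg (.of_forall fun _ => abs_nonneg _)
          ((integrable_abs_deriv_ramp ha).add (integrable_abs_deriv_ramp two_ne_zero))
          (abs_deriv_bumpProfile_ae_le ha)
    _ = 2 := by
      rw [integral_add (integrable_abs_deriv_ramp ha) (integrable_abs_deriv_ramp two_ne_zero),
        integral_abs_deriv_ramp ha, integral_abs_deriv_ramp two_ne_zero]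
      norm_num

lemma integral_abs_deriv_bumpProfile_div_le {a J : ℝ} (ha : a ≠ 0) (hJ : 0 < J) :
    ∫ x in Ioi 0, |deriv (fun y => bumpProfile a y / J) x| ≤ 2 / J := by
  simp_rw [deriv_div_const, abs_div, abs_of_pos hJ]
  rw [integral_div]
  gcongr
  exact (setIntegral_le_integral (integrable_abs_deriv_bumpProfile ha)
    (.of_forall fun _ => abs_nonneg _)).trans (integral_abs_deriv_bumpProfile_le ha)

noncomputable def normalizedPrimitive (g : ℝ → ℝ) (x : ℝ) : ℝ :=
  (∫ s in 0..x, g s) / ∫ s in 0..1, g s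

section NormalizedPrimitive

variable {g : ℝ → ℝ}

lemma hasDerivAt_normalizedPrimitive (hg : Continuous g) (x : ℝ) :
    HasDerivAt (normalizedPrimitive g) (g x / ∫ s in 0..1, g s) x :=
  ((hg.integral_hasStrictDerivAt 0 x).hasDerivAt).div_const _

lemma deriv_normalizedPrimitive (hg : Continuous g) :
    deriv (normalizedPrimitive g) = fun x => g x / ∫ s in 0..1, g s :=
  funext fun x => (hasDerivAt_normalizedPrimitive hg x).deriv

lemma contDiff_normalizedPrimitive (hg : Continuous g) :
    ContDiff ℝ 1 (normalizedPrimitive g) := by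
  rw [contDiff_one_iff_deriv, deriv_normalizedPrimitive hg]
  exact ⟨fun x => (hasDerivAt_normalizedPrimitive hg x).differentiableAt, hg.div_const _⟩

lemma normalizedPrimitive_eq_zero {x : ℝ} (hx : 0 ≤ x) (hg0 : EqOn g 0 (Icc 0 x)) :
    normalizedPrimitive g x = 0 := by
  rw [normalizedPrimitive, intervalIntegral.integral_congr (by rwa [uIcc_of_le hx]),
    Pi.zero_def, intervalIntegral.integral_zero, zero_div]

lemma one_sub_normalizedPrimitive (hg : Continuous g) (hJ : ∫ s in 0..1, g s ≠ 0) (x : ℝ) :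
    1 - normalizedPrimitive g x = (∫ s in x..1, g s) / ∫ s in 0..1, g s := by
  rw [normalizedPrimitive, ← intervalIntegral.integral_add_adjacent_intervals
    (hg.intervalIntegrable 0 x) (hg.intervalIntegrable x 1)] at *
  field_simp
  ring

lemma normalizedPrimitive_eq_one (hg : Continuous g) (hJ : ∫ s in 0..1, g s ≠ 0) {x : ℝ}
    (hx : 1 ≤ x) (hg1 : EqOn g 0 (Icc 1 x)) : normalizedPrimitive g x = 1 := by
  have : ∫ s in x..1, g s = 0 := by
    rw [intervalIntegral.integral_symm, intervalIntegral.integral_congr (by rwa [uIcc_of_le hx]),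
      Pi.zero_def, intervalIntegral.integral_zero, neg_zero]
  have h := one_sub_normalizedPrimitive hg hJ x
  rw [this, zero_div] at h
  linarith

lemma normalizedPrimitive_mem_Icc (hg : Continuous g) (hg_nonneg : 0 ≤ g)
    (hg1 : EqOn g 0 (Ici 1)) (hJ : 0 < ∫ s in 0..1, g s) {x : ℝ} (hx : 0 ≤ x) :
    normalizedPrimitive g x ∈ Icc 0 1 := by
  refine ⟨div_nonneg (intervalIntegral.integral_nonneg hx fun s _ => hg_nonneg s) hJ.le, ?_⟩
  rcases le_total x 1 with hx1 | hx1
  · have := one_sub_normalizedPrimitive hg hJ.ne' x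
    have : 0 ≤ (∫ s in x..1, g s) / ∫ s in 0..1, g s :=
      div_nonneg (intervalIntegral.integral_nonneg hx1 fun s _ => hg_nonneg s) hJ.le
    linarith
  · exact (normalizedPrimitive_eq_one hg hJ.ne' hx1 (hg1.mono Icc_subset_Ici_self)).le

end NormalizedPrimitive

lemma lintegral_Ioc_eq_top_of_continuousOn {f : ℝ → ℝ} {a b c : ℝ}
    (hf : ContinuousOn f (Icc b c)) (h : ∫⁻ x in Ioc a c, ENNReal.ofReal (f x) = ⊤) :
    ∫⁻ x in Ioc a b, ENNReal.ofReal (f x) = ⊤ := by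
  have hbc : ∫⁻ x in Ioc b c, ENNReal.ofReal (f x) < ⊤ :=
    (hf.integrableOn_Icc.mono_set Ioc_subset_Icc_self).lintegral_lt_top
  by_contra hab
  have hac := (lintegral_mono_set (μ := volume) (f := fun x => ENNReal.ofReal (f x))
    (Ioc_subset_Ioc_union_Ioc (a := a) (b := b) (c := c))).trans (lintegral_union_le _ _ _)
  rw [h, top_le_iff] at hac
  exact (ENNReal.add_lt_top.2 ⟨lt_top_iff_ne_top.2 hab, hbc⟩).ne hac

lemma tendsto_setIntegral_Ioc_atTop {f : ℝ → ℝ} {b : ℝ} (hf : ContinuousOn f (Ioc 0 b))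
    (hf_nonneg : ∀ x ∈ Ioc 0 b, 0 ≤ f x) (h : ∫⁻ x in Ioc 0 b, ENNReal.ofReal (f x) = ⊤) :
    Tendsto (fun ε => ∫ x in Ioc ε b, f x) (𝓝[>] 0) atTop := by
  have hcover : AECover (volume.restrict (Ioc 0 b)) (𝓝[>] 0) fun ε => Ioc ε b :=
    aecover_Ioc_of_Ioc nhdsWithin_le_nhds tendsto_const_nhds
  have hlim := hcover.lintegral_tendsto_of_countably_generated
    (hf.aemeasurable measurableSet_Ioc).ennreal_ofReal
  rw [h] at hlim
  refine ENNReal.tendsto_ofReal_nhds_top.1 (hlim.congr' ?_)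
  filter_upwards [self_mem_nhdsWithin] with ε (hε : 0 < ε)
  have hsub : Ioc ε b ⊆ Ioc 0 b := Ioc_subset_Ioc_left hε.le
  rw [Measure.restrict_restrict measurableSet_Ioc, inter_eq_left.2 hsub,
    ofReal_integral_eq_lintegral_ofReal]
  · exact (hf.mono (Icc_subset_Ioc hε le_rfl)).integrableOn_Icc.mono_set Ioc_subset_Icc_self
  · exact (ae_restrict_iff' measurableSet_Ioc).2 (.of_forall fun x hx => hf_nonneg x (hsub hx))

noncomputable def weightedBump (c : ℝ → ℝ) (a s : ℝ) : ℝ := bumpProfile a s / c s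

section WeightedBump

variable {c : ℝ → ℝ} {a : ℝ}

lemma continuousOn_inv_Ioi (hc_cont : Continuous c) (hc_pos : ∀ x > (0:ℝ), 0 < c x) :
    ContinuousOn (fun s => (c s)⁻¹) (Ioi 0) :=
  fun x hx => (hc_cont.continuousAt.inv₀ (hc_pos x hx).ne').continuousWithinAt

lemma weightedBump_of_nonpos (ha : 2 ≤ a) {s : ℝ} (hs : s ≤ 0) : weightedBump c a s = 0 := by
  rw [weightedBump, bumpProfile_of_le_inv ha (hs.trans (by positivity)), zero_div]

lemma continuous_weightedBump (hc_cont : Continuous c) (hc_pos : ∀ x > (0:ℝ), 0 < c x)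
    (ha : 2 ≤ a) : Continuous (weightedBump c a) := by
  refine continuous_iff_continuousAt.2 fun x => ?_
  rcases lt_or_ge 0 x with hx | hx
  · exact (continuous_bumpProfile a).continuousAt.div hc_cont.continuousAt (hc_pos x hx).ne'
  · refine continuousAt_const.congr (f := 0) ?_
    filter_upwards [Iio_mem_nhds (hx.trans_lt (inv_pos.2 (by linarith : (0:ℝ) < a)))] with s hs
    rw [weightedBump, bumpProfile_of_le_inv ha hs.le, zero_div, Pi.zero_apply]

lemma weightedBump_nonneg (hc_pos : ∀ x > (0:ℝ), 0 < c x) (ha : 2 ≤ a) :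
    0 ≤ weightedBump c a := by
  intro s
  rcases lt_or_ge 0 s with hs | hs
  · exact div_nonneg (bumpProfile_nonneg ha s) (hc_pos s hs).le
  · rw [weightedBump_of_nonpos ha hs, Pi.zero_apply]

lemma weightedBump_le_inv (hc_pos : ∀ x > (0:ℝ), 0 < c x) {s : ℝ} (hs : 0 < s) :
    weightedBump c a s ≤ (c s)⁻¹ := by
  rw [weightedBump, div_eq_mul_inv]
  exact mul_le_of_le_one_left (inv_nonneg.2 (hc_pos s hs).le) (bumpProfile_le_one a s)

lemma weightedBump_eqOn_Icc (ha : 2 ≤ a) : EqOn (weightedBump c a) 0 (Icc 0 a⁻¹) :=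
  fun _ hs => by rw [weightedBump, bumpProfile_of_le_inv ha hs.2, zero_div, Pi.zero_apply]

lemma weightedBump_eqOn_Ici (ha : 2 ≤ a) : EqOn (weightedBump c a) 0 (Ici 1) :=
  fun _ hs => by rw [weightedBump, bumpProfile_of_one_le ha hs, zero_div, Pi.zero_apply]

lemma mul_weightedBump (hc_pos : ∀ x > (0:ℝ), 0 < c x) (ha : 2 ≤ a) (y : ℝ) :
    c y * weightedBump c a y = bumpProfile a y := by
  rw [weightedBump, mul_div_assoc']
  rcases lt_or_ge 0 y with hy | hy
  · exact mul_div_cancel_left₀ _ (hc_pos y hy).ne'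
  · rw [bumpProfile_of_le_inv ha (hy.trans (by positivity)), mul_zero, zero_div]

lemma mul_deriv_normalizedPrimitive_weightedBump (hc_cont : Continuous c)
    (hc_pos : ∀ x > (0:ℝ), 0 < c x) (ha : 2 ≤ a) :
    (fun y => c y * deriv (normalizedPrimitive (weightedBump c a)) y) =
      fun y => bumpProfile a y / ∫ s in 0..1, weightedBump c a s := by
  ext y
  rw [deriv_normalizedPrimitive (continuous_weightedBump hc_cont hc_pos ha)]
  beta_reduce
  rw [mul_div_assoc', mul_weightedBump hc_pos ha]

lemma setIntegral_inv_le_integral_weightedBump (hc_cont : Continuous c)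
    (hc_pos : ∀ x > (0:ℝ), 0 < c x) (ha : 2 ≤ a) :
    ∫ s in Ioc (2 / a) (1 / 2), (c s)⁻¹ ≤ ∫ s in 0..1, weightedBump c a s := by
  have ha0 : 0 < a := by linarith
  have hsub : Ioc (2 / a) (1 / 2) ⊆ Ioc 0 1 := Ioc_subset_Ioc (by positivity) (by norm_num)
  have hplateau : EqOn (fun s => (c s)⁻¹) (weightedBump c a) (Ioc (2 / a) (1 / 2)) :=
    fun s hs => by rw [weightedBump, bumpProfile_of_mem_Icc ha0 (Ioc_subset_Icc_self hs), one_div]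
  rw [intervalIntegral.integral_of_le zero_le_one, setIntegral_congr_fun measurableSet_Ioc hplateau]
  exact setIntegral_mono_set
    ((continuous_weightedBump hc_cont hc_pos ha).integrableOn_Icc.mono_set Ioc_subset_Icc_self)
    (.of_forall (weightedBump_nonneg hc_pos ha)) hsub.eventuallyLE

lemma tendsto_integral_weightedBump_atTop (hc_cont : Continuous c)
    (hc_pos : ∀ x > (0:ℝ), 0 < c x)
    (hν_inf : ∫⁻ s in Ioc (0:ℝ) 1, ENNReal.ofReal ((c s)⁻¹) = ⊤) :
    Tendsto (fun n : ℕ => ∫ s in 0..1, weightedBump c n s) atTop atTop := by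
  have hcont := continuousOn_inv_Ioi hc_cont hc_pos
  have hdiv := tendsto_setIntegral_Ioc_atTop (hcont.mono Ioc_subset_Ioi_self)
    (fun x hx => (inv_pos.2 (hc_pos x hx.1)).le)
    (lintegral_Ioc_eq_top_of_continuousOn
      (hcont.mono fun x (hx : x ∈ Icc (1 / 2 : ℝ) 1) => lt_of_lt_of_le (by norm_num) hx.1)
      hν_inf)
  have h2n : Tendsto (fun n : ℕ => 2 / (n : ℝ)) atTop (𝓝[>] 0) :=
    tendsto_nhdsWithin_iff.2 ⟨tendsto_const_div_atTop_nhds_zero_nat 2,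
      (eventually_gt_atTop 0).mono fun n hn => by simp only [mem_Ioi]; positivity⟩
  refine tendsto_atTop_mono' _ ?_ (hdiv.comp h2n)
  filter_upwards [eventually_ge_atTop 2] with n hn
  exact setIntegral_inv_le_integral_weightedBump hc_cont hc_pos (by exact_mod_cast hn)

lemma tendsto_normalizedPrimitive_weightedBump (hc_cont : Continuous c)
    (hc_pos : ∀ x > (0:ℝ), 0 < c x)
    (hν_inf : ∫⁻ s in Ioc (0:ℝ) 1, ENNReal.ofReal ((c s)⁻¹) = ⊤) {x : ℝ} (hx : 0 < x) :
    Tendsto (fun n : ℕ => normalizedPrimitive (weightedBump c n) x) atTop (𝓝 1) := by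
  have hJ := tendsto_integral_weightedBump_atTop hc_cont hc_pos hν_inf
  have hev := (tendsto_natCast_atTop_atTop.eventually_ge_atTop (2:ℝ)).and
    (hJ.eventually_gt_atTop 0)
  rcases le_or_gt 1 x with hx1 | hx1
  · refine tendsto_const_nhds.congr' ?_
    filter_upwards [hev] with n ⟨hn, hJn⟩
    exact (normalizedPrimitive_eq_one (continuous_weightedBump hc_cont hc_pos hn) hJn.ne' hx1
      ((weightedBump_eqOn_Ici hn).mono Icc_subset_Ici_self)).symm
  set K := ∫ s in x..1, (c s)⁻¹
  have hK : Tendsto (fun n : ℕ => 1 - K / ∫ s in 0..1, weightedBump c n s) atTop (𝓝 1) := by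
    simpa using tendsto_const_nhds.sub (tendsto_const_nhds.div_atTop hJ)
  refine tendsto_of_tendsto_of_tendsto_of_le_of_le' hK tendsto_const_nhds ?_ ?_
  · filter_upwards [hev] with n ⟨hn, hJn⟩
    have hg := continuous_weightedBump hc_cont hc_pos hn
    have hle : ∫ s in x..1, weightedBump c n s ≤ K :=
      intervalIntegral.integral_mono_on hx1.le (hg.intervalIntegrable x 1)
        (ContinuousOn.intervalIntegrable_of_Icc hx1.le
          ((continuousOn_inv_Ioi hc_cont hc_pos).mono fun s hs => hx.trans_le hs.1))
        fun s hs => weightedBump_le_inv hc_pos (hx.trans_le hs.1)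
    have := one_sub_normalizedPrimitive hg hJn.ne' x
    have := div_le_div_of_nonneg_right hle hJn.le
    linarith
  · filter_upwards [hev] with n ⟨hn, hJn⟩
    exact (normalizedPrimitive_mem_Icc (continuous_weightedBump hc_cont hc_pos hn)
      (weightedBump_nonneg hc_pos hn) (weightedBump_eqOn_Ici hn) hJn hx.le).2

end WeightedBump

theorem stmt_14_general (c : ℝ → ℝ)
    (hc_cont : Continuous c)
    (hc_pos : ∀ x > (0:ℝ), 0 < c x)
    (hν_inf : ∫⁻ s in Set.Ioc (0:ℝ) 1, ENNReal.ofReal ((c s)⁻¹) = ⊤) :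
    ∃ (N : ℕ) (φ : ℕ → ℝ → ℝ),
      (∀ n : ℕ, N ≤ n →
        ContDiffOn ℝ 1 (φ n) (Set.Ici 0) ∧
        (∀ x ∈ Set.Ici (0:ℝ), φ n x ∈ Set.Icc (0:ℝ) 1) ∧
        (∀ x ∈ Set.Icc (0:ℝ) ((n : ℝ))⁻¹, φ n x = 0) ∧
        (∀ x : ℝ, 1 ≤ x → φ n x = 1) ∧
        (∃ S : Finset ℝ, ∀ x ∈ Set.Ioi (0:ℝ), x ∉ S →
          DifferentiableAt ℝ (fun y => c y * deriv (φ n) y) x)) ∧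
      (∀ x > (0:ℝ),
        Filter.Tendsto (fun n => φ n x) Filter.atTop (nhds 1)) ∧
      Filter.Tendsto
        (fun n => ∫ x in Set.Ioi (0:ℝ),
          |deriv (fun y => c y * deriv (φ n) y) x|)
        Filter.atTop (nhds 0) := by
  have hJ := tendsto_integral_weightedBump_atTop hc_cont hc_pos hν_inf
  have hev := (tendsto_natCast_atTop_atTop.eventually_ge_atTop (2:ℝ)).and
    (hJ.eventually_gt_atTop 0)
  obtain ⟨N, hN⟩ := eventually_atTop.1 hev
  refine ⟨N, fun n => normalizedPrimitive (weightedBump c n), fun n hn => ?_,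
    fun x hx => tendsto_normalizedPrimitive_weightedBump hc_cont hc_pos hν_inf hx, ?_⟩
  · obtain ⟨ha, hJn⟩ := hN n hn
    have hg := continuous_weightedBump hc_cont hc_pos ha
    refine ⟨(contDiff_normalizedPrimitive hg).contDiffOn,
      fun x hx => normalizedPrimitive_mem_Icc hg (weightedBump_nonneg hc_pos ha)
        (weightedBump_eqOn_Ici ha) hJn hx,
      fun x hx => normalizedPrimitive_eq_zero hx.1
        ((weightedBump_eqOn_Icc ha).mono (Icc_subset_Icc_right hx.2)),
      fun x hx => normalizedPrimitive_eq_one hg hJn.ne' hx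
        ((weightedBump_eqOn_Ici ha).mono Icc_subset_Ici_self),
      {(n : ℝ)⁻¹, 2 / (n : ℝ), 1 / 2, 1}, fun x _ hx => ?_⟩
    rw [mul_deriv_normalizedPrimitive_weightedBump hc_cont hc_pos ha]
    exact (differentiableAt_bumpProfile (by positivity) hx).div_const _
  · refine squeeze_zero' (.of_forall fun n => integral_nonneg fun x => abs_nonneg _) ?_
      ((tendsto_const_nhds (x := (2:ℝ))).div_atTop hJ)
    filter_upwards [hev] with n ⟨ha, hJn⟩
    rw [mul_deriv_normalizedPrimitive_weightedBump hc_cont hc_pos ha]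
    exact integral_abs_deriv_bumpProfile_div_le (by positivity) hJn

/-- Paper: construction in the proof of Proposition 5.3, establishing
conditions (cond1) and (cond2). -/
theorem stmt_14 (c : ℝ → ℝ)
    (hc_cont : Continuous c)
    (hc_pos : ∀ x > (0:ℝ), 0 < c x)
    (hc_diff : ∀ x ∈ Set.Ioo (0:ℝ) 1, DifferentiableAt ℝ c x)
    (M : ℝ) (hM : ∀ x ∈ Set.Ioo (0:ℝ) 1, |deriv c x| ≤ M)
    (hν_inf : ∫⁻ s in Set.Ioc (0:ℝ) 1, ENNReal.ofReal ((c s)⁻¹) = ⊤) :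
    ∃ (N : ℕ) (φ : ℕ → ℝ → ℝ),
      (∀ n : ℕ, N ≤ n →
        ContDiffOn ℝ 1 (φ n) (Set.Ici 0) ∧
        (∀ x ∈ Set.Ici (0:ℝ), φ n x ∈ Set.Icc (0:ℝ) 1) ∧
        (∀ x ∈ Set.Icc (0:ℝ) ((n : ℝ))⁻¹, φ n x = 0) ∧
        (∀ x : ℝ, 1 ≤ x → φ n x = 1) ∧
        (∃ S : Finset ℝ, ∀ x ∈ Set.Ioi (0:ℝ), x ∉ S →
          DifferentiableAt ℝ (fun y => c y * deriv (φ n) y) x)) ∧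
      (∀ x > (0:ℝ),
        Filter.Tendsto (fun n => φ n x) Filter.atTop (nhds 1)) ∧
      Filter.Tendsto
        (fun n => ∫ x in Set.Ioi (0:ℝ),
          |deriv (fun y => c y * deriv (φ n) y) x|)
        Filter.atTop (nhds 0) :=
  stmt_14_general c hc_cont hc_pos hν_inf
end

section
/- Let γ > 0. Suppose η : (0,∞) → ℝ is differentiable with ∫₀¹ η(t)² dt < ∞, and x ↦ c(x)η'(x) is differentiable with (c(x)η'(x))' = γ·η(x) for every x ∈ (0,1]. Then for all x, x₀ with 0 < x ≤ x₀ ≤ 1: |η(x) − η(x₀) + c(x₀)η'(x₀)·ν_{x₀}(x)| ≤ γ·(∫₀¹ η(t)² dt)^{1/2}·(x₀ − x)^{1/2}·ν_{x₀}(x), where ν_{x₀}(x) = ∫ₓ^{x₀} c(s)⁻¹ ds. -/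
/-!
Write `w = c η'`. Since `w' = γ η`, the Cauchy–Schwarz inequality bounds the increment
`w x₀ - w s = γ ∫ₛ^{x₀} η` by `γ ‖η‖_{L²(0,1)} √(x₀ - x)` uniformly for `s ∈ [x, x₀]`.
Integrating `η' = w / c` over `[x, x₀]` writes the left-hand side as
`∫ₓ^{x₀} (w x₀ - w s) / c s ds`, which that uniform bound controls by `γ ‖η‖₂ √(x₀ - x) ν_{x₀}(x)`.
-/

open MeasureTheory Set

lemma abs_intervalIntegral_le_sqrt_integral_sq_mul_sqrt {f : ℝ → ℝ} {a b : ℝ} (hab : a ≤ b)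
    (hf : MemLp f 2 (volume.restrict (Ioc a b))) :
    |∫ u in a..b, f u| ≤ √(∫ u in Ioc a b, f u ^ 2) * √(b - a) := by
  have hCS := integral_mul_norm_le_Lp_mul_Lq (μ := volume.restrict (Ioc a b))
    Real.HolderConjugate.two_two (by simpa using hf) (by simpa using memLp_const (1 : ℝ))
  have hvol : ∫ _ in Ioc a b, (1 : ℝ) = b - a := by
    simp [sub_nonneg.mpr hab]
  simp only [norm_one, mul_one, one_pow, Real.rpow_two, Real.norm_eq_abs, sq_abs, hvol,
    ← Real.sqrt_eq_rpow] at hCS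
  calc |∫ u in a..b, f u| ≤ ∫ u in Ioc a b, |f u| := by
        rw [intervalIntegral.integral_of_le hab]
        exact norm_integral_le_integral_norm f
    _ ≤ _ := hCS

lemma abs_sub_le_of_hasDerivAt_const_mul {w η : ℝ → ℝ} {γ a b : ℝ} (hab : a ≤ b)
    (hw : ∀ t ∈ Icc a b, HasDerivAt w (γ * η t) t) (hη : MemLp η 2 (volume.restrict (Ioc a b))) :
    |w b - w a| ≤ |γ| * √(∫ t in Ioc a b, η t ^ 2) * √(b - a) := by
  have hint : IntervalIntegrable (fun t => γ * η t) volume a b :=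
    ((intervalIntegrable_iff_integrableOn_Ioc_of_le hab).mpr
      (hη.integrable one_le_two)).const_mul γ
  rw [← intervalIntegral.integral_eq_sub_of_hasDerivAt (by rwa [uIcc_of_le hab]) hint,
    intervalIntegral.integral_const_mul, abs_mul, mul_assoc]
  exact mul_le_mul_of_nonneg_left (abs_intervalIntegral_le_sqrt_integral_sq_mul_sqrt hab hη)
    (abs_nonneg γ)

lemma sub_add_mul_integral_inv_eq_integral {c η : ℝ → ℝ} {a b : ℝ} (hab : a ≤ b)
    (hc : ContinuousOn c (Icc a b)) (hc_ne : ∀ s ∈ Icc a b, c s ≠ 0)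
    (hη : ∀ s ∈ Icc a b, DifferentiableAt ℝ η s)
    (hflux : ContinuousOn (fun s => c s * deriv η s) (Icc a b)) :
    η a - η b + c b * deriv η b * ∫ s in a..b, (c s)⁻¹
      = ∫ s in a..b, (c b * deriv η b - c s * deriv η s) * (c s)⁻¹ := by
  have hcinv : ContinuousOn (fun s => (c s)⁻¹) (Icc a b) := hc.inv₀ hc_ne
  have hderiv : EqOn (fun s => c s * deriv η s * (c s)⁻¹) (deriv η) (Icc a b) := fun s hs => by
    field_simp [hc_ne s hs]
  have hint : IntervalIntegrable (fun s => c s * deriv η s * (c s)⁻¹) volume a b :=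
    (hflux.mul hcinv).intervalIntegrable_of_Icc hab
  have hFTC : ∫ s in a..b, c s * deriv η s * (c s)⁻¹ = η b - η a := by
    rw [intervalIntegral.integral_congr (hderiv.mono (uIcc_of_le hab).subset)]
    exact intervalIntegral.integral_eq_sub_of_hasDerivAt
      (fun s hs => (hη s (by rwa [uIcc_of_le hab] at hs)).hasDerivAt)
      ((hflux.mul hcinv).congr hderiv.symm |>.intervalIntegrable_of_Icc hab)
  simp_rw [sub_mul]
  rw [intervalIntegral.integral_sub ((hcinv.intervalIntegrable_of_Icc hab).const_mul _) hint,
    intervalIntegral.integral_const_mul, hFTC]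
  ring

lemma abs_intervalIntegral_mul_inv_le {f c : ℝ → ℝ} {a b M : ℝ} (hab : a ≤ b)
    (hc : ContinuousOn c (Icc a b)) (hc_pos : ∀ s ∈ Icc a b, 0 < c s)
    (hf : ∀ s ∈ Icc a b, |f s| ≤ M) :
    |∫ s in a..b, f s * (c s)⁻¹| ≤ M * ∫ s in a..b, (c s)⁻¹ := by
  rw [← intervalIntegral.integral_const_mul, ← Real.norm_eq_abs]
  refine intervalIntegral.norm_integral_le_of_norm_le (g := fun s => M * (c s)⁻¹) hab
    (ae_of_all _ fun s hs => ?_)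
    (((hc.inv₀ fun s hs => (hc_pos s hs).ne').intervalIntegrable_of_Icc hab).const_mul M)
  have hcinv_pos : 0 < (c s)⁻¹ := inv_pos.2 (hc_pos s (Ioc_subset_Icc_self hs))
  rw [Real.norm_eq_abs, abs_mul, abs_of_pos hcinv_pos]
  exact mul_le_mul_of_nonneg_right (hf s (Ioc_subset_Icc_self hs)) hcinv_pos.le

/-- Paper: estimate from Remark 2.11, controlling the small-x behaviour of the
deficiency solution η_γ. -/
theorem stmt_16 (c : ℝ → ℝ)
    (hc_cont : ContinuousOn c (Set.Ioi 0))
    (hc_pos : ∀ x > (0:ℝ), 0 < c x)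
    (γ : ℝ) (hγ : 0 < γ)
    (η : ℝ → ℝ)
    (hη_diff : ∀ x > (0:ℝ), DifferentiableAt ℝ η x)
    (hη_L2 : MeasureTheory.IntegrableOn (fun t => (η t) ^ 2) (Set.Ioc 0 1))
    (hode : ∀ x ∈ Set.Ioc (0:ℝ) 1,
      HasDerivAt (fun y => c y * deriv η y) (γ * η x) x) :
    ∀ x x₀ : ℝ, 0 < x → x ≤ x₀ → x₀ ≤ 1 →
      |η x - η x₀ + c x₀ * deriv η x₀ * ∫ s in x..x₀, (c s)⁻¹|
        ≤ γ * Real.sqrt (∫ t in Set.Ioc (0:ℝ) 1, (η t) ^ 2)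
          * Real.sqrt (x₀ - x) * ∫ s in x..x₀, (c s)⁻¹ := by
  intro x x₀ hx hxx₀ hx₀1
  have hpos : Icc x x₀ ⊆ Ioi 0 := fun s hs => hx.trans_le hs.1
  have hsub : Icc x x₀ ⊆ Ioc 0 1 := fun s hs => ⟨hpos hs, hs.2.trans hx₀1⟩
  have hη_mem : MemLp η 2 (volume.restrict (Ioc 0 1)) :=
    (memLp_two_iff_integrable_sq (ContinuousOn.aestronglyMeasurable
      (fun s hs => (hη_diff s hs.1).continuousAt.continuousWithinAt) measurableSet_Ioc)).mpr hη_L2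
  have hflux_bound : ∀ s ∈ Icc x x₀, |c x₀ * deriv η x₀ - c s * deriv η s|
      ≤ γ * √(∫ t in Ioc 0 1, η t ^ 2) * √(x₀ - x) := by
    intro s hs
    have hIoc : Ioc s x₀ ⊆ Ioc 0 1 := fun t ht => hsub ⟨hs.1.trans ht.1.le, ht.2⟩
    calc _ ≤ |γ| * √(∫ t in Ioc s x₀, η t ^ 2) * √(x₀ - s) :=
          abs_sub_le_of_hasDerivAt_const_mul hs.2
            (fun t ht => hode t (hsub ⟨hs.1.trans ht.1, ht.2⟩))
            (hη_mem.mono_measure (Measure.restrict_mono hIoc le_rfl))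
      _ ≤ _ := by
          rw [abs_of_pos hγ]
          gcongr ?_ * √?_ * √(_ - ?_)
          · exact setIntegral_mono_set hη_L2 (ae_of_all _ fun t => sq_nonneg (η t))
              hIoc.eventuallyLE
          · exact hs.1
  rw [sub_add_mul_integral_inv_eq_integral hxx₀ (hc_cont.mono hpos)
    (fun s hs => (hc_pos s (hpos hs)).ne') (fun s hs => hη_diff s (hpos hs))
    (fun s hs => (hode s (hsub hs)).continuousAt.continuousWithinAt)]
  exact abs_intervalIntegral_mul_inv_le hxx₀ (hc_cont.mono hpos) (fun s hs => hc_pos s (hpos hs))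
    hflux_bound
end

section
/- Assume c(0) = 0 and ∫₀¹ ν₊(x)² dx < ∞, where ν₊(x) = ∫ₓ¹ c(s)⁻¹ ds for x ∈ (0,1]. Then for every smooth compactly supported ψ : ℝ → ℝ: ν₊(x)·c(x)·ψ'(x) → 0 as x → 0⁺. -/
/-!
Since `1 / c > 0` on `(0, 1]`, `ν₊` is nonnegative and decreasing there, so
`x · ν₊(x)² ≤ ∫₀ˣ ν₊²`. Since `c(0) = 0`, Cauchy–Schwarz gives `c(x)² ≤ x · ∫₀ˣ c'²`.
Multiplying, `ν₊(x) c(x) ≤ ‖ν₊‖_{L²(0,x)} ‖c'‖_{L²(0,x)}`, and both factors tend to `0`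
with `x` by absolute continuity of the integral; `ψ'` is bounded near `0`.
-/

open MeasureTheory Filter Set Topology

theorem antitoneOn_intervalIntegral_left {f : ℝ → ℝ} {μ : Measure ℝ} {a b : ℝ}
    (hf : ∀ x ∈ Ioc a b, IntervalIntegrable f μ x b) (hf_nonneg : ∀ x ∈ Ioc a b, 0 ≤ f x) :
    AntitoneOn (fun x => ∫ t in x..b, f t ∂μ) (Ioc a b) := fun x hx _ hy hxy =>
  intervalIntegral.integral_mono_interval hxy hy.2 le_rfl
    (ae_restrict_of_forall_mem measurableSet_Ioc fun _ ht => hf_nonneg _ ⟨hx.1.trans ht.1, ht.2⟩)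
    (hf x hx)

theorem abs_intervalIntegral_le_sqrt_mul_sqrt {g : ℝ → ℝ} {a b : ℝ} (hab : a ≤ b)
    (hg : IntegrableOn (fun t => g t ^ 2) (Ioc a b)) :
    |∫ t in a..b, g t| ≤ √(b - a) * √(∫ t in Ioc a b, g t ^ 2) := by
  by_cases hint : IntervalIntegrable g volume a b
  swap
  · rw [intervalIntegral.integral_undef hint, abs_zero]
    positivity
  have habs_meas : AEStronglyMeasurable (fun t => |g t|) (volume.restrict (Ioc a b)) := by
    simpa only [Real.sqrt_sq_eq_abs] using
      Real.continuous_sqrt.comp_aestronglyMeasurable hg.aestronglyMeasurable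
  have habs_memLp : MemLp (fun t => |g t|) (ENNReal.ofReal 2) (volume.restrict (Ioc a b)) := by
    rw [ENNReal.ofReal_ofNat, memLp_two_iff_integrable_sq habs_meas]
    simpa only [sq_abs] using hg.integrable
  have hHolder := integral_mul_le_Lp_mul_Lq_of_nonneg Real.HolderConjugate.two_two
    (ae_of_all _ fun t => abs_nonneg (g t)) (ae_of_all _ fun _ => zero_le_one) habs_memLp
    (memLp_const 1)
  simp only [mul_one, Real.rpow_two, sq_abs, one_pow, setIntegral_const,
    Real.volume_real_Ioc_of_le hab, smul_eq_mul, ← Real.sqrt_eq_rpow] at hHolder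
  calc |∫ t in a..b, g t|
      ≤ ∫ t in a..b, |g t| := intervalIntegral.abs_integral_le_integral_abs hab
    _ = ∫ t in Ioc a b, |g t| := intervalIntegral.integral_of_le hab
    _ ≤ √(b - a) * √(∫ t in Ioc a b, g t ^ 2) := by linarith

theorem sqrt_mul_le_sqrt_setIntegral_sq_of_antitoneOn {f : ℝ → ℝ} {a b : ℝ} (hab : a < b)
    (hf : AntitoneOn f (Ioc a b)) (hfb : 0 ≤ f b)
    (hf2 : IntegrableOn (fun t => f t ^ 2) (Ioc a b)) :
    √(b - a) * f b ≤ √(∫ t in Ioc a b, f t ^ 2) := by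
  have hmono := setIntegral_mono_on (integrableOn_const measure_Ioc_lt_top.ne) hf2
    measurableSet_Ioc fun t ht => pow_le_pow_left₀ hfb (hf ht ⟨hab, le_rfl⟩ ht.2) 2
  rw [setIntegral_const, Real.volume_real_Ioc_of_le hab.le, smul_eq_mul] at hmono
  calc √(b - a) * f b = √((b - a) * f b ^ 2) := by
        rw [Real.sqrt_mul (sub_nonneg.2 hab.le), Real.sqrt_sq hfb]
    _ ≤ √(∫ t in Ioc a b, f t ^ 2) := Real.sqrt_le_sqrt hmono

theorem tendsto_mul_nhdsGT_of_antitoneOn {f g g' : ℝ → ℝ} {a b : ℝ} (hab : a < b)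
    (hf : AntitoneOn f (Ioc a b)) (hfb : 0 ≤ f b)
    (hf2 : IntegrableOn (fun t => f t ^ 2) (Ioc a b))
    (hg : ∀ x ∈ Ioc a b, g x = ∫ t in a..x, g' t)
    (hg' : IntegrableOn (fun t => g' t ^ 2) (Ioc a b)) :
    Tendsto (fun x => f x * g x) (𝓝[>] a) (𝓝 0) := by
  have hbound : Tendsto (fun x => √(∫ t in Ioc a x, f t ^ 2) * √(∫ t in Ioc a x, g' t ^ 2))
      (𝓝[>] a) (𝓝 0) := by
    simpa using (tendsto_setIntegral_Ioc_nhdsGT hab hf2).sqrt.mul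
      (tendsto_setIntegral_Ioc_nhdsGT hab hg').sqrt
  refine squeeze_zero_norm' ?_ hbound
  filter_upwards [Ioc_mem_nhdsGT hab] with x hx
  have hsub : Ioc a x ⊆ Ioc a b := Ioc_subset_Ioc_right hx.2
  have hfx : 0 ≤ f x := hfb.trans (hf hx ⟨hab, le_rfl⟩ hx.2)
  have hf_tail := sqrt_mul_le_sqrt_setIntegral_sq_of_antitoneOn hx.1 (hf.mono hsub) hfx
    (hf2.mono_set hsub)
  have hg_bound := abs_intervalIntegral_le_sqrt_mul_sqrt hx.1.le (hg'.mono_set hsub)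
  rw [← hg x hx] at hg_bound
  calc ‖f x * g x‖ = f x * |g x| := by rw [Real.norm_eq_abs, abs_mul, abs_of_nonneg hfx]
    _ ≤ f x * (√(x - a) * √(∫ t in Ioc a x, g' t ^ 2)) :=
        mul_le_mul_of_nonneg_left hg_bound hfx
    _ = √(x - a) * f x * √(∫ t in Ioc a x, g' t ^ 2) := by ring
    _ ≤ √(∫ t in Ioc a x, f t ^ 2) * √(∫ t in Ioc a x, g' t ^ 2) :=
        mul_le_mul_of_nonneg_right hf_tail (Real.sqrt_nonneg _)

/-- Paper: boundary-form computation in the proof of Proposition 3.1: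
(ν₊·c·ψ')(0⁺) = 0 for ψ ∈ C_c^∞(ℝ), when c(0) = 0 and ν₊ ∈ L²(0,1). -/
theorem stmt_18 (c c' : ℝ → ℝ)
    (hc_cont : Continuous c)
    (hc_pos : ∀ x : ℝ, x ≠ 0 → 0 < c x)
    (hc0 : c 0 = 0)
    (hc' : ∀ x y : ℝ, x ≤ y → c y - c x = ∫ t in x..y, c' t)
    (hc'_loc : ∀ a b : ℝ, a < b →
      MeasureTheory.IntegrableOn (fun t => (c' t) ^ 2) (Set.Ioc a b))
    (hν_L2 : MeasureTheory.IntegrableOn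
      (fun x => (∫ s in x..1, (c s)⁻¹) ^ 2) (Set.Ioc 0 1)) :
    ∀ ψ : ℝ → ℝ, ContDiff ℝ (⊤ : ℕ∞) ψ → HasCompactSupport ψ →
      Filter.Tendsto (fun x => (∫ s in x..1, (c s)⁻¹) * c x * deriv ψ x)
        (nhdsWithin 0 (Set.Ioi 0)) (nhds 0) := by
  intro ψ hψ _
  have hν_anti : AntitoneOn (fun x => ∫ s in x..1, (c s)⁻¹) (Ioc 0 1) := by
    refine antitoneOn_intervalIntegral_left (fun x hx => ?_)
      fun x hx => (inv_pos.2 (hc_pos x hx.1.ne')).le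
    refine (hc_cont.continuousOn.inv₀ fun t ht => (hc_pos t ?_).ne').intervalIntegrable
    rw [uIcc_of_le hx.2] at ht
    exact (hx.1.trans_le ht.1).ne'
  have hc_eq : ∀ x ∈ Ioc (0 : ℝ) 1, c x = ∫ t in 0..x, c' t := fun x hx => by
    simpa [hc0] using hc' 0 x hx.1.le
  have hνc := tendsto_mul_nhdsGT_of_antitoneOn zero_lt_one hν_anti
    (by rw [intervalIntegral.integral_same]) hν_L2 hc_eq (hc'_loc 0 1 zero_lt_one)
  have hψ' : Tendsto (deriv ψ) (𝓝[>] 0) (𝓝 (deriv ψ 0)) :=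
    ((hψ.continuous_deriv (by simp)).tendsto 0).mono_left nhdsWithin_le_nhds
  simpa using hνc.mul hψ'
end
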